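/- arXiv:1604.01906 — 10 statements merged into one kernel-verified Lean document; each statement's English description precedes it below -/
import Mathlib

section
/- Let τ ∈ ℂ with Im τ > 0 and |τ| = 1, and let Γ_τ = {m + n·τ : m, n ∈ ℤ}. Suppose I(z) = a·conj(z) + b with a ∈ {τ, −τ} and b ∈ ℂ is a lift of an antiholomorphic involution of the torus ℂ/Γ_τ. Then I has a fixpoint, i.e. there exists z ∈ ℂ with I(z) − z ∈ Γ_τ. -/
/-!
Write `a = ε τ` with `ε = ±1` and `b = p + q τ` with `p, q` real. Since `τ τ̄ = 1`,
`I (I 0) = a b̄ + b = (p + ε q) + (q + ε p) τ`, so `q + ε p` is an integer `n` because `1, τ` are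
linearly independent over `ℝ`. At the real point `z = -ε q` the `τ`-parts of `I z` and `z` cancel and
`I z - z = p + ε q = ε n ∈ ℤ`.
-/

open Complex ComplexConjugate

namespace Complex

lemma exists_eq_ofReal_add_ofReal_mul {τ : ℂ} (hτ : τ.im ≠ 0) (b : ℂ) :
    ∃ p q : ℝ, b = p + q * τ := by
  refine ⟨b.re - b.im / τ.im * τ.re, b.im / τ.im, Complex.ext ?_ ?_⟩
  · simp
  · simp [hτ]

lemma ofReal_add_ofReal_mul_inj {τ : ℂ} (hτ : τ.im ≠ 0) {x y x' y' : ℝ} :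
    (x : ℂ) + y * τ = x' + y' * τ ↔ x = x' ∧ y = y' := by
  refine ⟨fun h => ?_, fun ⟨hx, hy⟩ => by rw [hx, hy]⟩
  have hy : y = y' := by
    simpa [hτ] using congrArg Complex.im h
  subst hy
  exact ⟨by exact_mod_cast add_right_cancel h, rfl⟩

end Complex

def lattice (τ : ℂ) : Set ℂ := {z : ℂ | ∃ m n : ℤ, z = m + n * τ}

lemma mul_conj_add_eq {τ : ℂ} (hτ : τ * conj τ = 1) (ε : ℤ) (p q : ℝ) :
    ε * τ * conj (p + q * τ) + (p + q * τ) = (p + ε * q : ℝ) + (q + ε * p : ℝ) * τ := by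
  simp only [map_add, map_mul, conj_ofReal]
  push_cast
  linear_combination (ε * q : ℂ) * hτ

lemma exists_sub_mem_lattice {τ : ℂ} (hτ : τ.im ≠ 0) (hτ1 : τ * conj τ = 1) {ε : ℤ}
    (hε : ε * ε = 1) (b : ℂ) (h : ε * τ * conj b + b ∈ lattice τ) :
    ∃ z, ε * τ * conj z + b - z ∈ lattice τ := by
  obtain ⟨p, q, rfl⟩ := exists_eq_ofReal_add_ofReal_mul hτ b
  obtain ⟨m, n, hmn⟩ := h
  rw [mul_conj_add_eq hτ1] at hmn
  have hn : (q : ℂ) + ε * p = n := by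
    exact_mod_cast ((ofReal_add_ofReal_mul_inj hτ).1 (by exact_mod_cast hmn)).2
  have hεc : (ε : ℂ) * ε = 1 := by exact_mod_cast hε
  refine ⟨-(ε * q : ℝ), ε * n, 0, ?_⟩
  simp only [map_neg, conj_ofReal]
  push_cast
  linear_combination -(q * τ + p) * hεc + ε * hn

theorem stmt_2_general (τ : ℂ) (hτ : 0 < τ.im) (habs : ‖τ‖ = 1)
    (Γ : Set ℂ) (hΓ : Γ = {z : ℂ | ∃ m n : ℤ, z = m + n * τ})
    (a b : ℂ) (ha : a = τ ∨ a = -τ)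
    (I : ℂ → ℂ) (hI : ∀ z : ℂ, I z = a * starRingEnd ℂ z + b)
    (hinv : ∀ z : ℂ, I (I z) - z ∈ Γ) :
    ∃ z : ℂ, I z - z ∈ Γ := by
  obtain ⟨ε, hε, rfl⟩ : ∃ ε : ℤ, ε * ε = 1 ∧ a = ε * τ := by
    rcases ha with rfl | rfl
    exacts [⟨1, rfl, by simp⟩, ⟨-1, rfl, by simp⟩]
  obtain rfl : I = fun z => ε * τ * conj z + b := funext hI
  obtain rfl : Γ = lattice τ := hΓ
  have hτ1 : τ * conj τ = 1 := by rw [mul_conj', habs]; norm_num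
  simpa using exists_sub_mem_lattice hτ.ne' hτ1 hε b (by simpa using hinv 0)

theorem stmt_2 (τ : ℂ) (hτ : 0 < τ.im) (habs : ‖τ‖ = 1)
    (Γ : Set ℂ) (hΓ : Γ = {z : ℂ | ∃ m n : ℤ, z = m + n * τ})
    (a b : ℂ) (ha : a = τ ∨ a = -τ)
    (I : ℂ → ℂ) (hI : ∀ z : ℂ, I z = a * starRingEnd ℂ z + b)
    (hper : ∀ z : ℂ, ∀ ω ∈ Γ, I (z + ω) - I z ∈ Γ)
    (hinv : ∀ z : ℂ, I (I z) - z ∈ Γ) :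
    ∃ z : ℂ, I z - z ∈ Γ :=
  stmt_2_general τ hτ habs Γ hΓ a b ha I hI hinv
end

section
/- Let τ ∈ ℂ with Im τ > 0 and |τ| = 1, and let Γ_τ = {m + n·τ : m, n ∈ ℤ}. Suppose I(z) = a·conj(z) + b with a ∈ ℂ, a ∉ {1, −1}, and b ∈ ℂ is a lift of an antiholomorphic involution of the torus ℂ/Γ_τ. Then I has a fixpoint, i.e. there exists z ∈ ℂ with I(z) − z ∈ Γ_τ. -/
open Complex ComplexConjugate

/-! Since `I (z + ω) - I z = a * conj ω`, the involution `σ ω = a * conj ω` preserves `Γ_τ`, and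
`I (I z) - z = (a * conj a - 1) * z + (a * conj b + b)` lies in `Γ_τ` for every `z`, which forces
`|a| = 1` and `γ = a * conj b + b ∈ Γ_τ` with `σ γ = γ`. Writing `a = m + n τ`, the conditions
`|a| = |τ| = 1` and `a * conj τ ∈ Γ_τ` leave `n = ±1` as the only integer solution, so `1, a` is a
basis of `Γ_τ` exchanged by `σ`. Hence `γ = x (1 + a) = x + σ x` for some `x ∈ ℤ`, and
`z = (b - x) / 2` satisfies `I z - z = x`. -/

def latticeOf (τ : ℂ) : Set ℂ := {z | ∃ m n : ℤ, z = m + n * τ}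

theorem one_mem_latticeOf (τ : ℂ) : (1 : ℂ) ∈ latticeOf τ := ⟨1, 0, by simp⟩

theorem self_mem_latticeOf (τ : ℂ) : τ ∈ latticeOf τ := ⟨0, 1, by simp⟩

theorem half_notMem_latticeOf {τ : ℂ} (hτ : τ.im ≠ 0) : (1 / 2 : ℂ) ∉ latticeOf τ := by
  rintro ⟨m, n, h⟩
  have hn : (n : ℝ) = 0 := by
    have him := congrArg im h
    simp only [div_ofNat_im, one_im, add_im, intCast_im, mul_im, intCast_re] at him
    simpa [hτ] using him.symm
  have hre := congrArg re h
  simp only [div_ofNat_re, one_re, add_re, intCast_re, mul_re, intCast_im, hn] at hre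
  have h2m : 2 * m = 1 := by exact_mod_cast (by linarith : (2 * m : ℝ) = 1)
  omega

theorem latticeOf_subset_latticeOf {τ a : ℂ} {m n : ℤ} (hn : IsUnit n) (ha : a = m + n * τ) :
    latticeOf τ ⊆ latticeOf a := by
  rintro _ ⟨u, v, rfl⟩
  have hnn : (n : ℂ) * n = 1 := by exact_mod_cast Int.isUnit_mul_self hn
  exact ⟨u - v * n * m, v * n, by push_cast; linear_combination (-(v : ℂ) * n) * ha - v * τ * hnn⟩

theorem eq_zero_of_forall_mul_add_mem {Γ : Set ℂ} {w c d : ℂ} (hw : w ∉ Γ)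
    (h : ∀ z, c * z + d ∈ Γ) : c = 0 := by
  by_contra hc
  exact hw (by simpa [mul_div_cancel₀ _ hc] using h ((w - d) / c))

theorem mul_conj_comp_sub (a b z : ℂ) :
    a * conj (a * conj z + b) + b - z = (a * conj a - 1) * z + (a * conj b + b) := by
  simp only [map_add, map_mul, conj_conj]
  ring

theorem mul_conj_sub_eq_of_eq_add_mul_conj {a b ω : ℂ} (h : a * conj b + b = ω + a * conj ω) :
    a * conj ((b - ω) / 2) + b - (b - ω) / 2 = ω := by
  simp only [map_div₀, map_sub, map_ofNat]
  linear_combination h / 2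

theorem exists_intCast_mul_one_add_of_mul_conj_eq {a γ : ℂ} (ha : a ≠ 1) (hnorm : a * conj a = 1)
    (hγ : γ ∈ latticeOf a) (hfix : a * conj γ = γ) : ∃ x : ℤ, γ = x * (1 + a) := by
  obtain ⟨x, y, rfl⟩ := hγ
  simp only [map_add, map_mul, map_intCast] at hfix
  have hxy : ((x : ℂ) - y) * (a - 1) = 0 := by linear_combination hfix - (y : ℂ) * hnorm
  have hxy' : (x : ℂ) = y := sub_eq_zero.1 ((mul_eq_zero.1 hxy).resolve_right (sub_ne_zero.2 ha))
  exact ⟨x, by rw [← hxy']; ring⟩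

section UnitCircle

variable {τ : ℂ} (habs : ‖τ‖ = 1)
include habs

theorem mul_conj_of_norm_eq_one : τ * conj τ = 1 := by
  rw [mul_conj, normSq_eq_norm_sq, habs]
  simp

theorem intCast_add_mul_mul_conj (m n : ℤ) :
    (m + n * τ) * conj (m + n * τ) = ((m ^ 2 + 2 * m * n * τ.re + n ^ 2 : ℝ) : ℂ) := by
  simp only [map_add, map_mul, map_intCast]
  push_cast
  linear_combination (norm := (push_cast; ring))
    (n : ℂ) ^ 2 * mul_conj_of_norm_eq_one habs + m * n * add_conj τ

theorem re_coord_mul_conj (hτ : τ.im ≠ 0) {m n p q : ℤ} (h : (m + n * τ) * conj τ = p + q * τ) :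
    (p : ℝ) = 2 * m * τ.re + n := by
  have h' : (m : ℂ) * conj τ + n = p + q * τ := by
    linear_combination h - n * mul_conj_of_norm_eq_one habs
  have him := congrArg im h'
  have hre := congrArg re h'
  simp only [add_im, mul_im, intCast_re, intCast_im, conj_im, conj_re, add_re, mul_re] at him hre
  have hq : (q : ℝ) = -m := mul_right_cancel₀ hτ (by linarith)
  rw [hq] at hre
  linarith

end UnitCircle

theorem Int.isUnit_of_sq_add_mul_add_sq_eq_one {m n p : ℤ} {r : ℝ} (hr : r ^ 2 < 1) (hn : n ≠ 0)
    (h : (m : ℝ) ^ 2 + 2 * m * n * r + n ^ 2 = 1) (hp : (p : ℝ) = 2 * m * r + n) : IsUnit n := by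
  have hnp : n * p = 1 - m ^ 2 := by
    have : (n : ℝ) * p = 1 - m ^ 2 := by rw [hp]; linear_combination h
    exact_mod_cast this
  rcases eq_or_ne m 0 with rfl | hm
  · exact IsUnit.of_mul_eq_one p (by simpa using hnp)
  -- `(1 - (m + n)²) (1 - (m - n)²) = (2mn)² (r² - 1) < 0` forces `m = ±n`
  have hneg : (1 - (m + n) ^ 2) * (1 - (m - n) ^ 2) < 0 := by
    have hmn : (m : ℝ) * n ≠ 0 := by exact_mod_cast mul_ne_zero hm hn
    have : ((1 - (m + n) ^ 2) * (1 - (m - n) ^ 2) : ℝ) < 0 :=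
      calc ((1 - (m + n) ^ 2) * (1 - (m - n) ^ 2) : ℝ) = 4 * (m * n) ^ 2 * (r ^ 2 - 1) := by
            linear_combination ((m : ℝ) ^ 2 + n ^ 2 - 1 - 2 * m * n * r) * h
        _ < 0 := mul_neg_of_pos_of_neg (by positivity) (by linarith)
    exact_mod_cast this
  have hmn : (m + n) * (m - n) = 0 := by
    by_contra hne
    obtain ⟨h₁, h₂⟩ := mul_ne_zero_iff.1 hne
    have k₁ : 1 ≤ (m + n) ^ 2 := by have : 0 < (m + n) ^ 2 := by positivity
                                    omega
    have k₂ : 1 ≤ (m - n) ^ 2 := by have : 0 < (m - n) ^ 2 := by positivity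
                                    omega
    nlinarith [mul_nonneg (sub_nonneg.2 k₁) (sub_nonneg.2 k₂)]
  exact IsUnit.of_mul_eq_one (p + n) (by linear_combination hnp - hmn)

theorem isUnit_coeff_of_mul_conj_mem {τ a : ℂ} (hτ : τ.im ≠ 0) (habs : ‖τ‖ = 1)
    (ha : a ≠ 1 ∧ a ≠ -1) (hnorm : a * conj a = 1) {m n : ℤ} (ham : a = m + n * τ)
    (haτ : a * conj τ ∈ latticeOf τ) : IsUnit n := by
  obtain ⟨p, q, hpq⟩ := haτ
  have hn : n ≠ 0 := by
    rintro rfl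
    have : a * a = 1 := by simpa [ham] using hnorm
    rcases mul_self_eq_one_iff.1 this with h | h
    exacts [ha.1 h, ha.2 h]
  have hr : τ.re ^ 2 < 1 := by
    have hre : τ.re ^ 2 = 1 - τ.im ^ 2 := by rw [← sq_norm_sub_sq_im, habs]; norm_num
    have him : 0 < τ.im ^ 2 := by positivity
    linarith
  have h : (m : ℝ) ^ 2 + 2 * m * n * τ.re + n ^ 2 = 1 := by
    have := intCast_add_mul_mul_conj habs m n
    rw [← ham, hnorm] at this
    exact_mod_cast this.symm
  exact Int.isUnit_of_sq_add_mul_add_sq_eq_one hr hn h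
    (re_coord_mul_conj habs hτ (ham ▸ hpq))

theorem stmt_3 (τ : ℂ) (hτ : 0 < τ.im) (habs : ‖τ‖ = 1)
    (Γ : Set ℂ) (hΓ : Γ = {z : ℂ | ∃ m n : ℤ, z = m + n * τ})
    (a b : ℂ) (ha : a ≠ 1 ∧ a ≠ -1)
    (I : ℂ → ℂ) (hI : ∀ z : ℂ, I z = a * starRingEnd ℂ z + b)
    (hper : ∀ z : ℂ, ∀ ω ∈ Γ, I (z + ω) - I z ∈ Γ)
    (hinv : ∀ z : ℂ, I (I z) - z ∈ Γ) :
    ∃ z : ℂ, I z - z ∈ Γ := by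
  obtain rfl : Γ = latticeOf τ := hΓ
  obtain rfl : I = fun z => a * conj z + b := funext hI
  have hmul : ∀ ω ∈ latticeOf τ, a * conj ω ∈ latticeOf τ := fun ω hω => by
    simpa using hper 0 ω hω
  have hcomp : ∀ z, (a * conj a - 1) * z + (a * conj b + b) ∈ latticeOf τ := fun z => by
    simpa only [mul_conj_comp_sub] using hinv z
  have hnorm : a * conj a = 1 :=
    sub_eq_zero.1 (eq_zero_of_forall_mul_add_mem (half_notMem_latticeOf hτ.ne') hcomp)
  have hγ : a * conj b + b ∈ latticeOf τ := by simpa using hcomp 0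
  have hfix : a * conj (a * conj b + b) = a * conj b + b := by
    simp only [map_add, map_mul, conj_conj]
    linear_combination b * hnorm
  obtain ⟨m, n, ham⟩ : a ∈ latticeOf τ := by simpa using hmul 1 (one_mem_latticeOf τ)
  have hn := isUnit_coeff_of_mul_conj_mem hτ.ne' habs ha hnorm ham (hmul τ (self_mem_latticeOf τ))
  obtain ⟨x, hx⟩ := exists_intCast_mul_one_add_of_mul_conj_eq ha.1 hnorm
    (latticeOf_subset_latticeOf hn ham hγ) hfix
  refine ⟨(b - x) / 2, x, 0, ?_⟩
  rw [mul_conj_sub_eq_of_eq_add_mul_conj (by rw [hx, map_intCast]; ring)]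
  simp
end

section
/- Let τ ∈ ℂ with Im τ > 0 and −1/2 < Re τ ≤ 1/2, let Γ_τ = {m + n·τ : m, n ∈ ℤ}, and suppose I(z) = −conj(z) + b with b ∈ ℂ is a lift of an antiholomorphic involution of the torus ℂ/Γ_τ. Then the lattice is real, i.e. {conj(ω) : ω ∈ Γ_τ} = Γ_τ, and Re τ ∈ {0, 1/2}. If Re τ = 1/2, then I has a fixpoint, i.e. there exists z ∈ ℂ with I(z) − z ∈ Γ_τ. If Re τ = 0 and I has no fixpoint, then there exists δ ∈ ℂ such that I(z + δ) − δ − (−conj(z) + τ/2) ∈ Γ_τ for all z ∈ ℂ; moreover, the map z ↦ −conj(z) + τ/2 has no fixpoint modulo Γ_τ, i.e. (−conj(z) + τ/2) − z ∉ Γ_τ for all z ∈ ℂ. -/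
open Complex

theorem stmt_7 (τ : ℂ) (hτ : 0 < τ.im)
    (hre : -(1/2) < τ.re ∧ τ.re ≤ 1/2)
    (Γ : Set ℂ) (hΓ : Γ = {z : ℂ | ∃ m n : ℤ, z = m + n * τ})
    (b : ℂ)
    (I : ℂ → ℂ) (hI : ∀ z : ℂ, I z = -starRingEnd ℂ z + b)
    (hper : ∀ z : ℂ, ∀ ω ∈ Γ, I (z + ω) - I z ∈ Γ)
    (hinv : ∀ z : ℂ, I (I z) - z ∈ Γ) :
    (starRingEnd ℂ) '' Γ = Γ ∧ (τ.re = 0 ∨ τ.re = 1/2) ∧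
    (τ.re = 1/2 → ∃ z : ℂ, I z - z ∈ Γ) ∧
    (τ.re = 0 → (∀ z : ℂ, I z - z ∉ Γ) →
      (∃ δ : ℂ, ∀ z : ℂ, I (z + δ) - δ - (-starRingEnd ℂ z + τ/2) ∈ Γ) ∧
      (∀ z : ℂ, (-starRingEnd ℂ z + τ/2) - z ∉ Γ)) := by
  have him : τ.im ≠ 0 := ne_of_gt hτ
  have hτΓ : τ ∈ Γ := by rw [hΓ]; exact ⟨0, 1, by push_cast; ring⟩
  have h1 : -(starRingEnd ℂ) τ ∈ Γ := by
    have := hper 0 τ hτΓ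
    simpa [hI, map_add] using this
  rw [hΓ] at h1
  obtain ⟨m, n, hmn⟩ := h1
  have hn : (n : ℝ) = 1 := by
    have h := congrArg Complex.im hmn
    simp [Complex.add_im, Complex.mul_im] at h
    have : (n : ℝ) * τ.im = 1 * τ.im := by linarith
    exact mul_right_cancel₀ him this
  have hn1 : n = 1 := by exact_mod_cast hn
  subst hn1
  have hreτ : 2 * τ.re = -(m : ℝ) := by
    have h := congrArg Complex.re hmn
    simp [Complex.add_re, Complex.mul_re] at h
    linarith
  have hm01 : m = 0 ∨ m = -1 := by
    have h1 : (-1 : ℝ) ≤ (m : ℝ) := by linarith [hre.2]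
    have h2 : (m : ℝ) < 1 := by linarith [hre.1]
    have h1' : (-1 : ℤ) ≤ m := by exact_mod_cast h1
    have h2' : m < 1 := by exact_mod_cast h2
    omega
  have hconjτ : (starRingEnd ℂ) τ = -(m : ℂ) - τ := by
    push_cast at hmn
    linear_combination -hmn
  have hconjmem : ∀ w ∈ Γ, (starRingEnd ℂ) w ∈ Γ := by
    intro w hw
    rw [hΓ] at hw ⊢
    obtain ⟨p, q, rfl⟩ := hw
    refine ⟨p - q * m, -q, ?_⟩
    simp only [map_add, map_mul, map_intCast, hconjτ]
    push_cast
    ring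
  have himg : (starRingEnd ℂ) '' Γ = Γ := by
    apply Set.eq_of_subset_of_subset
    · rintro z ⟨w, hw, rfl⟩
      exact hconjmem w hw
    · intro z hz
      exact ⟨(starRingEnd ℂ) z, hconjmem z hz, Complex.conj_conj z⟩
  -- involution data
  have h2 : -(starRingEnd ℂ) b + b ∈ Γ := by
    have := hinv 0
    simpa [hI, map_add, map_neg] using this
  rw [hΓ] at h2
  obtain ⟨p, q, hpq⟩ := h2
  have hpq_im : 2 * b.im = (q : ℝ) * τ.im := by
    have h := congrArg Complex.im hpq
    simp [Complex.add_im, Complex.mul_im] at h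
    linarith
  have hpq_re : 0 = (p : ℝ) + (q : ℝ) * τ.re := by
    have h := congrArg Complex.re hpq
    simp [Complex.add_re, Complex.mul_re] at h
    linarith
  refine ⟨himg, ?_, ?_, ?_⟩
  · rcases hm01 with h | h
    · left; subst h; simpa using hreτ
    · right; subst h; push_cast at hreτ; linarith
  · -- τ.re = 1/2 → fixpoint
    intro h12
    have hq : (q : ℝ) = -2 * p := by
      rw [h12] at hpq_re; linarith
    refine ⟨(((b.re + (p : ℝ) * τ.re) / 2 : ℝ) : ℂ), ?_⟩
    rw [hΓ, hI]
    refine ⟨0, -p, ?_⟩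
    simp only [Complex.conj_ofReal]
    apply Complex.ext
    · simp [Complex.add_re, Complex.mul_re, Complex.sub_re]
      ring
    · simp [Complex.add_im, Complex.mul_im, Complex.sub_im]
      rw [hq] at hpq_im
      linarith
  · -- τ.re = 0 case
    intro h0 hfix
    have hp0 : (p : ℝ) = 0 := by rw [h0] at hpq_re; linarith
    have hqodd : Odd q := by
      rcases Int.even_or_odd q with ⟨k, hk⟩ | h
      · exfalso
        apply hfix (((b.re / 2 : ℝ) : ℂ))
        rw [hΓ, hI]
        refine ⟨0, k, ?_⟩
        have hkr : (q : ℝ) = k + k := by exact_mod_cast hk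
        simp only [Complex.conj_ofReal]
        apply Complex.ext
        · simp [Complex.add_re, Complex.mul_re, Complex.sub_re, h0]
          ring
        · simp [Complex.add_im, Complex.mul_im, Complex.sub_im, h0]
          rw [hkr] at hpq_im
          linarith
      · exact h
    obtain ⟨k, hk⟩ := hqodd
    have hkr : (q : ℝ) = 2 * k + 1 := by exact_mod_cast hk
    constructor
    · refine ⟨(((b.re / 2 : ℝ)) : ℂ), ?_⟩
      intro z
      rw [hΓ, hI]
      refine ⟨0, k, ?_⟩
      simp only [map_add, Complex.conj_ofReal]
      apply Complex.ext
      · simp [Complex.add_re, Complex.mul_re, Complex.sub_re, Complex.neg_re,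
          Complex.div_re, h0]
        ring
      · simp [Complex.add_im, Complex.mul_im, Complex.sub_im, Complex.neg_im,
          Complex.div_im, h0]
        ring_nf
        rw [hkr] at hpq_im
        linarith
    · intro z hz
      rw [hΓ] at hz
      obtain ⟨p', q', h⟩ := hz
      have him2 := congrArg Complex.im h
      simp [Complex.add_im, Complex.mul_im, Complex.sub_im, Complex.div_im,
        Complex.neg_im, Complex.conj_im, Complex.div_ofNat_im] at him2
      have h2q : (2 : ℝ) * q' = 1 := by
        have : τ.im / 2 = (q' : ℝ) * τ.im := by linarith
        field_simp at this
        rcases mul_eq_mul_right_iff.mp (by linarith : (2 * (q':ℝ)) * τ.im = 1 * τ.im) with h' | h'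
        · linarith
        · exact absurd h' him
      have : (2 : ℤ) * q' = 1 := by exact_mod_cast h2q
      omega
end

section
/- Let τ ∈ ℂ with Im τ > 0 and −1/2 < Re τ ≤ 1/2, let Γ_τ = {m + n·τ : m, n ∈ ℤ}, and suppose I(z) = conj(z) + b with b ∈ ℂ is a lift of an antiholomorphic involution of the torus ℂ/Γ_τ. Then the lattice is real, i.e. {conj(ω) : ω ∈ Γ_τ} = Γ_τ, and Re τ ∈ {0, 1/2}. Moreover, either I has a fixpoint (there exists z with I(z) − z ∈ Γ_τ), or there exists δ ∈ ℂ such that I(z + δ) − δ − (conj(z) + 1/2) ∈ Γ_τ for all z ∈ ℂ. Finally, if Re τ = 1/2 then I has a fixpoint. -/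
open Complex

theorem stmt_8 (τ : ℂ) (hτ : 0 < τ.im)
    (hre : -(1/2) < τ.re ∧ τ.re ≤ 1/2)
    (Γ : Set ℂ) (hΓ : Γ = {z : ℂ | ∃ m n : ℤ, z = m + n * τ})
    (b : ℂ)
    (I : ℂ → ℂ) (hI : ∀ z : ℂ, I z = starRingEnd ℂ z + b)
    (hper : ∀ z : ℂ, ∀ ω ∈ Γ, I (z + ω) - I z ∈ Γ)
    (hinv : ∀ z : ℂ, I (I z) - z ∈ Γ) :
    (starRingEnd ℂ) '' Γ = Γ ∧ (τ.re = 0 ∨ τ.re = 1/2) ∧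
    ((∃ z : ℂ, I z - z ∈ Γ) ∨
      ∃ δ : ℂ, ∀ z : ℂ, I (z + δ) - δ - (starRingEnd ℂ z + 1/2) ∈ Γ) ∧
    (τ.re = 1/2 → ∃ z : ℂ, I z - z ∈ Γ) := by
  have hmemτ : τ ∈ Γ := by rw [hΓ]; exact ⟨0, 1, by push_cast; ring⟩
  have h1 : starRingEnd ℂ τ ∈ Γ := by
    have h := hper 0 τ hmemτ
    have e : I (0 + τ) - I 0 = starRingEnd ℂ τ := by
      simp [hI]
    rwa [e] at h
  rw [hΓ] at h1
  obtain ⟨m, n, hmn⟩ := h1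
  have hnim : -τ.im = (n : ℝ) * τ.im := by
    have := congrArg Complex.im hmn; simpa using this
  have hn : n = -1 := by
    have h2 : ((n : ℝ) + 1) * τ.im = 0 := by ring_nf; linarith
    have h3 : (n : ℝ) + 1 = 0 := by
      rcases mul_eq_zero.1 h2 with h | h
      · exact h
      · linarith
    have : (n : ℝ) = -1 := by linarith
    exact_mod_cast this
  subst hn
  have hre2 : 2 * τ.re = (m : ℝ) := by
    have := congrArg Complex.re hmn; simp at this; linarith
  have hm01 : m = 0 ∨ m = 1 := by
    have hlt : (-1 : ℝ) < (m : ℝ) := by linarith [hre.1]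
    have hle : (m : ℝ) ≤ 1 := by linarith [hre.2]
    have hlt' : (-1 : ℤ) < m := by exact_mod_cast hlt
    have hle' : m ≤ 1 := by exact_mod_cast hle
    omega
  have hconjτ_eq : starRingEnd ℂ τ = (m : ℂ) - τ := by rw [hmn]; push_cast; ring
  have hclosed : ∀ w ∈ Γ, starRingEnd ℂ w ∈ Γ := by
    intro w hw
    rw [hΓ] at hw ⊢
    obtain ⟨a, c, rfl⟩ := hw
    refine ⟨a + c * m, -c, ?_⟩
    rw [map_add, map_mul, hconjτ_eq]
    push_cast
    simp
    ring
  have himg : (starRingEnd ℂ) '' Γ = Γ := by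
    apply Set.Subset.antisymm
    · rintro _ ⟨w, hw, rfl⟩; exact hclosed w hw
    · intro w hw
      exact ⟨starRingEnd ℂ w, hclosed w hw, by simp⟩
  have hb : starRingEnd ℂ b + b ∈ Γ := by
    have h := hinv 0
    have e : I (I 0) - 0 = starRingEnd ℂ b + b := by simp [hI]
    rwa [e] at h
  rw [hΓ] at hb
  obtain ⟨p, q, hpq⟩ := hb
  have hqim : (0 : ℝ) = (q : ℝ) * τ.im := by
    have := congrArg Complex.im hpq; simpa using this
  have hq : q = 0 := by
    have : (q : ℝ) = 0 := by
      rcases mul_eq_zero.1 hqim.symm with h | h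
      · exact h
      · linarith
    exact_mod_cast this
  subst hq
  have hbre : 2 * b.re = (p : ℝ) := by
    have := congrArg Complex.re hpq; simp at this; linarith
  -- even fixpoint
  have fixeven : ∀ k : ℤ, p = k + k → ∃ z : ℂ, I z - z ∈ Γ := by
    intro k hk
    obtain ⟨r, hr⟩ : ∃ r : ℝ, r = b.im / 2 := ⟨_, rfl⟩
    refine ⟨(r : ℂ) * Complex.I, ?_⟩
    rw [hΓ, hI]
    refine ⟨k, 0, ?_⟩
    have hbre' : b.re = (k : ℝ) := by
      have : (p : ℝ) = (k : ℝ) + (k : ℝ) := by exact_mod_cast congrArg (Int.cast : ℤ → ℝ) hk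
      linarith
    apply Complex.ext <;> simp [hbre'] <;> linarith [hr]
  -- odd fixpoint with Re τ = 1/2
  have fixodd : τ.re = 1/2 → ∀ k : ℤ, p = 2 * k + 1 → ∃ z : ℂ, I z - z ∈ Γ := by
    intro hre12 k hk
    obtain ⟨r, hr⟩ : ∃ r : ℝ, r = (b.im - τ.im) / 2 := ⟨_, rfl⟩
    refine ⟨(r : ℂ) * Complex.I, ?_⟩
    rw [hΓ, hI]
    refine ⟨k, 1, ?_⟩
    have hbre' : b.re = (k : ℝ) + 1/2 := by
      have : (p : ℝ) = 2 * (k : ℝ) + 1 := by exact_mod_cast congrArg (Int.cast : ℤ → ℝ) hk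
      linarith
    apply Complex.ext <;> simp [hbre', hre12] <;> linarith [hr]
  -- the disjunction
  have hthird : (∃ z : ℂ, I z - z ∈ Γ) ∨
      ∃ δ : ℂ, ∀ z : ℂ, I (z + δ) - δ - (starRingEnd ℂ z + 1/2) ∈ Γ := by
    rcases Int.even_or_odd p with ⟨k, hk⟩ | ⟨k, hk⟩
    · exact Or.inl (fixeven k hk)
    · obtain ⟨r, hr⟩ : ∃ r : ℝ, r = b.im / 2 := ⟨_, rfl⟩
      refine Or.inr ⟨(r : ℂ) * Complex.I, fun z => ?_⟩
      rw [hΓ, hI]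
      refine ⟨k, 0, ?_⟩
      have hbre' : b.re = (k : ℝ) + 1/2 := by
        have : (p : ℝ) = 2 * (k : ℝ) + 1 := by exact_mod_cast congrArg (Int.cast : ℤ → ℝ) hk
        linarith
      apply Complex.ext <;> simp [hbre'] <;> linarith [hr]
  refine ⟨himg, ?_, hthird, ?_⟩
  · rcases hm01 with rfl | rfl
    · left; simpa using hre2.symm
    · right; simp at hre2; linarith
  · intro hre12
    rcases Int.even_or_odd p with ⟨k, hk⟩ | ⟨k, hk⟩
    · exact fixeven k hk
    · exact fixodd hre12 k hk
end

section
/- Every lattice Γ in ℂ has a generating pair (ω, ω′) (i.e. Γ = {m·ω + n·ω′ : m, n ∈ ℤ}) such that τ := ω′/ω satisfies Im τ > 0, −1/2 < Re τ ≤ 1/2, |τ| ≥ 1, and if |τ| = 1 then Re τ ≥ 0; moreover, for this pair the map z ↦ z/ω maps Γ bijectively onto the lattice Γ_τ = {m + n·τ : m, n ∈ ℤ}, so that it induces a biholomorphic map from the torus ℂ/Γ onto ℂ/Γ_τ. -/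
open Complex UpperHalfPlane ModularGroup
open scoped MatrixGroups Modular

/-!
Flipping the sign of `ω'` if necessary, `ω' / ω` lies in the upper half plane. Replacing the
basis `(ω, ω')` by `(c ω' + d ω, a ω' + b ω)` with `[[a, b], [c, d]] ∈ SL(2, ℤ)` does not change
the lattice and moves `ω' / ω` by the Möbius transformation of that matrix, so `ω' / ω` can be
brought into the closed fundamental domain `𝒟`; one more application of `S` (on the left half of
the arc) or `T` (on the line `re τ = -1/2`) moves the left half of its boundary to the right half.
Finally `z ↦ z / ω` sends `m ω + n ω'` to `m + n (ω' / ω)`.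
-/

def intSpan (ω ω' : ℂ) : Set ℂ := {z | ∃ m n : ℤ, z = m * ω + n * ω'}

lemma intSpan_eq_of_det_eq_one {a b c d : ℤ} (h : a * d - b * c = 1) (ω ω' : ℂ) :
    intSpan (c * ω' + d * ω) (a * ω' + b * ω) = intSpan ω ω' := by
  have hC : (a : ℂ) * d - b * c = 1 := by exact_mod_cast h
  ext z
  constructor
  · rintro ⟨m, n, rfl⟩
    exact ⟨m * d + n * b, m * c + n * a, by push_cast; ring⟩
  · rintro ⟨m, n, rfl⟩
    exact ⟨a * m - b * n, d * n - c * m, by push_cast; linear_combination (-(m * ω + n * ω')) * hC⟩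

lemma intSpan_neg_right (ω ω' : ℂ) : intSpan ω (-ω') = intSpan ω ω' := by
  ext z
  constructor <;> rintro ⟨m, n, rfl⟩ <;> exact ⟨m, -n, by push_cast; ring⟩

lemma linearIndependent_pair_iff_im_div_ne_zero {ω ω' : ℂ} :
    LinearIndependent ℝ ![ω, ω'] ↔ (ω' / ω).im ≠ 0 := by
  rw [LinearIndependent.pair_iff]
  constructor
  · intro h him
    have hω : ω ≠ 0 := fun h0 => by
      have := h 1 0 (by simp [h0])
      norm_num at this
    have hτ : ω' / ω = ((ω' / ω).re : ℂ) := Complex.ext (by simp) (by simp [him])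
    have := h (ω' / ω).re (-1) (by
      rw [Complex.real_smul, Complex.real_smul, ← hτ, div_mul_cancel₀ _ hω]; push_cast; ring)
    norm_num at this
  · intro him s t hst
    have hω : ω ≠ 0 := by rintro rfl; simp at him
    have hτ : (s : ℂ) + t * (ω' / ω) = 0 := by
      rw [Complex.real_smul, Complex.real_smul] at hst
      field_simp
      linear_combination hst
    have ht : t = 0 := by
      simpa [him] using congrArg Complex.im hτ
    subst ht
    simpa using hτ

lemma bijOn_div_intSpan {ω : ℂ} (hω : ω ≠ 0) (ω' : ℂ) :
    Set.BijOn (fun z => z / ω) (intSpan ω ω') {z : ℂ | ∃ m n : ℤ, z = m + n * (ω' / ω)} := by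
  refine ⟨?_, fun _ _ _ _ h => (div_left_inj' hω).1 h, ?_⟩
  · rintro z ⟨m, n, rfl⟩
    exact ⟨m, n, by field_simp⟩
  · rintro w ⟨m, n, rfl⟩
    exact ⟨m * ω + n * ω', ⟨m, n, rfl⟩, by field_simp⟩

def fdStd : Set ℍ :=
  {τ | -(1/2) < τ.re ∧ τ.re ≤ 1/2 ∧ 1 ≤ ‖(τ : ℂ)‖ ∧ (‖(τ : ℂ)‖ = 1 → 0 ≤ τ.re)}

lemma one_le_norm_of_mem_fd {τ : ℍ} (hτ : τ ∈ 𝒟) : 1 ≤ ‖(τ : ℂ)‖ := by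
  have h := hτ.1
  rw [normSq_eq_norm_sq] at h
  nlinarith [norm_nonneg (τ : ℂ)]

lemma mem_fdStd_of_mem_fd {τ : ℍ} (hτ : τ ∈ 𝒟) (hre : τ.re ≠ -(1/2))
    (harc : ‖(τ : ℂ)‖ = 1 → 0 ≤ τ.re) : τ ∈ fdStd := by
  obtain ⟨hlo, hhi⟩ := abs_le.mp hτ.2
  exact ⟨lt_of_le_of_ne hlo hre.symm, hhi, one_le_norm_of_mem_fd hτ, harc⟩

lemma S_smul_mem_fdStd {τ : ℍ} (hτ : τ ∈ 𝒟) (hnorm : ‖(τ : ℂ)‖ = 1) (hre : τ.re < 0) :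
    S • τ ∈ fdStd := by
  have hns : normSq (τ : ℂ) = 1 := by rw [normSq_eq_norm_sq, hnorm, one_pow]
  have hSre : (S • τ).re = -τ.re := by
    rw [modular_S_smul, ← coe_re, coe_mk, inv_re, normSq_neg, hns, neg_re, div_one, coe_re]
  have hSnorm : ‖((S • τ : ℍ) : ℂ)‖ = 1 := by
    rw [modular_S_smul, coe_mk, norm_inv, norm_neg, hnorm, inv_one]
  obtain ⟨hlo, hhi⟩ := abs_le.mp hτ.2
  refine ⟨?_, ?_, hSnorm.ge, fun _ => ?_⟩ <;> rw [hSre] <;> linarith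

lemma T_smul_mem_fdStd {τ : ℍ} (hτ : τ ∈ 𝒟) (hre : τ.re = -(1/2)) : T • τ ∈ fdStd := by
  have hTre : (T • τ).re = 1/2 := by rw [re_T_smul, hre]; norm_num
  have hTnorm : ‖((T • τ : ℍ) : ℂ)‖ = ‖(τ : ℂ)‖ := by
    have : normSq ((T • τ : ℍ) : ℂ) = normSq (τ : ℂ) := by
      have hre' : (τ : ℂ).re = -(1/2) := hre
      rw [modular_T_smul, coe_vadd, normSq_apply, normSq_apply]
      simp only [add_re, add_im, ofReal_re, ofReal_im, hre']
      ring
    rw [Complex.norm_def, Complex.norm_def, this]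
  refine ⟨?_, hTre.le, hTnorm ▸ one_le_norm_of_mem_fd hτ, fun _ => ?_⟩ <;> rw [hTre] <;> norm_num

lemma exists_smul_mem_fdStd (τ : ℍ) : ∃ g : SL(2, ℤ), g • τ ∈ fdStd := by
  obtain ⟨g, hg⟩ := exists_smul_mem_fd τ
  by_cases harc : ‖((g • τ : ℍ) : ℂ)‖ = 1 ∧ (g • τ).re < 0
  · exact ⟨S * g, by rw [mul_smul]; exact S_smul_mem_fdStd hg harc.1 harc.2⟩
  by_cases hre : (g • τ).re = -(1/2)
  · exact ⟨T * g, by rw [mul_smul]; exact T_smul_mem_fdStd hg hre⟩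
  exact ⟨g, mem_fdStd_of_mem_fd hg hre fun h => not_lt.mp fun hlt => harc ⟨h, hlt⟩⟩

lemma coe_smul_mk_div (g : SL(2, ℤ)) {ω ω' : ℂ} (h : 0 < (ω' / ω).im) :
    ((g • (⟨ω' / ω, h⟩ : ℍ) : ℍ) : ℂ) = (g 0 0 * ω' + g 0 1 * ω) / (g 1 0 * ω' + g 1 1 * ω) := by
  have hω : ω ≠ 0 := by rintro rfl; simp at h
  have clear_denom (x y : ℂ) : x * (ω' / ω) + y = (x * ω' + y * ω) / ω := by field_simp
  rw [coe_specialLinearGroup_apply]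
  simp only [algebraMap_int_eq, eq_intCast, ofReal_intCast, clear_denom]
  exact div_div_div_cancel_right₀ hω _ _

lemma exists_intSpan_eq_im_div_pos {ω ω' : ℂ} (hli : LinearIndependent ℝ ![ω, ω']) :
    ∃ ω₁ ω₁' : ℂ, intSpan ω₁ ω₁' = intSpan ω ω' ∧ 0 < (ω₁' / ω₁).im := by
  rcases (linearIndependent_pair_iff_im_div_ne_zero.1 hli).lt_or_gt with him | him
  · exact ⟨ω, -ω', intSpan_neg_right ω ω', by rw [neg_div, neg_im]; linarith⟩
  · exact ⟨ω, ω', rfl, him⟩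

lemma exists_intSpan_eq_div_mem_fdStd {ω ω' : ℂ} (him : 0 < (ω' / ω).im) :
    ∃ ω₂ ω₂' : ℂ, ∃ τ ∈ fdStd, intSpan ω₂ ω₂' = intSpan ω ω' ∧ ω₂' / ω₂ = τ := by
  obtain ⟨g, hg⟩ := exists_smul_mem_fdStd ⟨ω' / ω, him⟩
  have hdet : g 0 0 * g 1 1 - g 0 1 * g 1 0 = 1 := by
    simpa only [Matrix.det_fin_two] using g.det_coe
  exact ⟨_, _, _, hg, intSpan_eq_of_det_eq_one hdet ω ω', (coe_smul_mk_div g him).symm⟩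

theorem stmt_10 (Γ : Set ℂ)
    (hΓ : ∃ ω ω' : ℂ, LinearIndependent ℝ ![ω, ω'] ∧
      Γ = {z : ℂ | ∃ m n : ℤ, z = m * ω + n * ω'}) :
    ∃ ω ω' : ℂ, LinearIndependent ℝ ![ω, ω'] ∧
      Γ = {z : ℂ | ∃ m n : ℤ, z = m * ω + n * ω'} ∧
      0 < (ω' / ω).im ∧ -(1/2) < (ω' / ω).re ∧ (ω' / ω).re ≤ 1/2 ∧
      1 ≤ ‖ω' / ω‖ ∧
      (‖ω' / ω‖ = 1 → 0 ≤ (ω' / ω).re) ∧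
      Set.BijOn (fun z => z / ω) Γ {z : ℂ | ∃ m n : ℤ, z = m + n * (ω' / ω)} := by
  obtain ⟨ω₀, ω₀', hli, rfl⟩ := hΓ
  obtain ⟨ω₁, ω₁', hspan₁, him₁⟩ := exists_intSpan_eq_im_div_pos hli
  obtain ⟨ω, ω', τ, ⟨hre₁, hre₂, hnorm, harc⟩, hspan, hτ⟩ := exists_intSpan_eq_div_mem_fdStd him₁
  have hlattice : intSpan ω₀ ω₀' = intSpan ω ω' := (hspan.trans hspan₁).symm
  have him : 0 < (ω' / ω).im := hτ ▸ τ.im_pos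
  have hω : ω ≠ 0 := by rintro rfl; simp at him
  have hbij := bijOn_div_intSpan hω ω'
  rw [← hlattice, hτ] at hbij
  refine ⟨ω, ω', linearIndependent_pair_iff_im_div_ne_zero.2 him.ne', hlattice, ?_⟩
  rw [hτ]
  exact ⟨τ.im_pos, hre₁, hre₂, hnorm, harc, hbij⟩
end

section
/- Let Γ be a lattice in ℂ and let I : ℂ → ℂ be a fixpoint-free lift of an antiholomorphic involution of the torus ℂ/Γ. Then there exist r > 0 and a, c ∈ ℂ with a ≠ 0 such that a·Γ = {m + n·i·r : m, n ∈ ℤ} (a rectangular lattice), and the conjugated involution by the affine map φ(z) = a·z + c satisfies φ(I(φ⁻¹(z))) − (conj(z) + 1/2) ∈ {m + n·i·r : m, n ∈ ℤ} for all z ∈ ℂ, i.e. a·I((z − c)/a) + c − (conj(z) + 1/2) ∈ {m + n·i·r : m, n ∈ ℤ} for all z ∈ ℂ. -/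
/-!
Since `I ∘ conj` is entire and `I(z + ω) - I(z)` is a continuous function of `z` with values in the
discrete set `Γ`, the derivative of `I ∘ conj` is doubly periodic, hence constant by Liouville, so
`I z = α * conj z + β`. Discreteness again forces `|α| = 1`, so after a rotation `u` with
`u * α = conj u` the lattice `Γ' = u Γ` is invariant under complex conjugation and the involution
becomes `w ↦ conj w + u β`. Absence of fixed points says that no point of `Γ'` has the real part of
`u β`; as `2 Re (u β)` lies in `Γ' ∩ ℝ = s ℤ`, this forces `Re (u β) ∈ s (ℤ + 1/2)` and then every
point of `Γ'` to have real part in `s ℤ`, i.e. `Γ' = s ℤ + i t ℤ` is rectangular. Scaling by `1 / s`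
and translating by the imaginary part of `u β` gives the normal form `z ↦ conj z + 1/2`.
-/

open Complex ComplexConjugate Set Bornology Submodule

theorem Submodule.coe_span_int_pair {R : Type*} [Ring R] (x y : R) :
    (span ℤ {x, y} : Set R) = {z | ∃ m n : ℤ, z = m * x + n * y} := by
  ext z
  simp only [SetLike.mem_coe, mem_span_pair, zsmul_eq_mul, mem_ofPred_eq]
  exact ⟨fun ⟨m, n, h⟩ => ⟨m, n, h.symm⟩, fun ⟨m, n, h⟩ => ⟨m, n, h.symm⟩⟩

theorem AddSubgroup.exists_pos_norm_le_of_discreteTopology {E : Type*} [NormedAddCommGroup E]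
    (L : AddSubgroup E) [DiscreteTopology L] : ∃ ε > 0, ∀ v ∈ L, v ≠ 0 → ε ≤ ‖v‖ := by
  obtain ⟨ε, hε, h⟩ := Metric.isOpen_singleton_iff.mp
    (discreteTopology_iff_isOpen_singleton_zero.mp ‹DiscreteTopology L›)
  refine ⟨ε, hε, fun v hv hv0 => not_lt.mp fun hlt => hv0 ?_⟩
  simpa using h ⟨v, hv⟩ (by simpa [dist_eq_norm] using hlt)

theorem AddSubgroup.exists_pos_eq_zmultiples {H : AddSubgroup ℝ} {ε : ℝ} (hε : 0 < ε)
    (hgap : ∀ x ∈ H, x ≠ 0 → ε ≤ |x|) (hH : H ≠ ⊥) : ∃ s > 0, H = zmultiples s := by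
  obtain ⟨g, rfl⟩ := AddSubgroup.cyclic_of_isolated_zero hε <| Set.disjoint_left.mpr
    fun x hx hxε => (hgap x hx hxε.1.ne').not_gt (by rw [abs_of_pos hxε.1]; exact hxε.2)
  rw [← AddSubgroup.zmultiples_eq_closure] at hH ⊢
  have hg : g ≠ 0 := by rintro rfl; simp at hH
  rcases hg.lt_or_gt with hg | hg
  · exact ⟨-g, neg_pos.mpr hg, AddSubgroup.zmultiples_neg.symm⟩
  · exact ⟨g, hg, rfl⟩

theorem ZSpan.apply_eq_apply_of_continuous {E ι X : Type*} [NormedAddCommGroup E]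
    [NormedSpace ℝ E] [Finite ι] (b : Module.Basis ι ℝ E) [TopologicalSpace X] [PreconnectedSpace X]
    {g : X → E} (hg : Continuous g) (hmem : ∀ x, g x ∈ span ℤ (range b)) (x y : X) : g x = g y :=
  isPreconnected_univ.constant_of_mapsTo
    (isDiscrete_iff_discreteTopology.mpr (inferInstance : DiscreteTopology (span ℤ (range b))))
    hg.continuousOn (fun x _ => hmem x) trivial trivial

theorem ZSpan.isBounded_range_of_periodic {E F ι : Type*} [NormedAddCommGroup E]
    [NormedSpace ℝ E] [ProperSpace E] [Fintype ι] (b : Module.Basis ι ℝ E) [PseudoMetricSpace F]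
    {g : E → F} (hg : Continuous g) (hper : ∀ v ∈ span ℤ (range b), ∀ z, g (z + v) = g z) :
    IsBounded (range g) := by
  refine ((ZSpan.fundamentalDomain_isBounded b).isCompact_closure.image hg).isBounded.subset ?_
  rintro - ⟨z, rfl⟩
  refine ⟨ZSpan.fract b z, subset_closure (ZSpan.fract_mem_fundamentalDomain b z), ?_⟩
  rw [ZSpan.fract_apply, ← hper _ (ZSpan.floor b z).2, sub_add_cancel]

theorem exists_eq_mul_add_of_isBounded_range_deriv {f : ℂ → ℂ}
    (hf : Differentiable ℂ f) (hb : IsBounded (range (deriv f))) :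
    ∃ α β, ∀ z, f z = α * z + β := by
  have hα : ∀ z, deriv f z = deriv f 0 := fun z => hf.deriv.apply_eq_apply_of_bounded hb z 0
  have hconst := is_const_of_deriv_eq_zero (f := fun z => f z - deriv f 0 * z)
    (hf.sub (differentiable_id.const_mul _)) fun z => by
      rw [deriv_fun_sub (hf z) (by fun_prop), hα]; simp
  exact ⟨deriv f 0, f 0, fun z => by simpa [sub_eq_iff_eq_add'] using hconst z 0⟩

theorem exists_eq_mul_conj_add {ι : Type*} [Fintype ι] (b : Module.Basis ι ℝ ℂ) {I : ℂ → ℂ}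
    (hent : Differentiable ℂ (fun z => I (conj z)))
    (hper : ∀ z, ∀ w ∈ span ℤ (range b), I (z + w) - I z ∈ span ℤ (range b)) :
    ∃ α β, ∀ z, I z = α * conj z + β := by
  set f := fun z => I (conj z)
  have hIc : Continuous I := by
    simpa [f, Function.comp_def] using hent.continuous.comp continuous_conj
  have hshift : ∀ w ∈ span ℤ (range b), ∀ ζ, f (ζ + conj w) = f ζ + (I w - I 0) := by
    intro w hw ζ
    have := ZSpan.apply_eq_apply_of_continuous b (g := fun z => I (z + w) - I z)
      (by fun_prop) (fun z => hper z w hw) (conj ζ) 0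
    simp only [f, map_add, conj_conj, zero_add] at this ⊢
    linear_combination this
  have hderiv : ∀ w ∈ span ℤ (range b), ∀ z, deriv f (conj (z + w)) = deriv f (conj z) := by
    intro w hw z
    rw [map_add, ← deriv_comp_add_const, funext (hshift w hw), deriv_add_const]
  obtain ⟨α, β, hαβ⟩ := exists_eq_mul_add_of_isBounded_range_deriv hent <| by
    simpa only [(Function.Involutive.surjective (f := conj) conj_conj).range_comp] using
      ZSpan.isBounded_range_of_periodic b (hent.deriv.continuous.comp continuous_conj) hderiv
  exact ⟨α, β, fun z => by simpa [f] using hαβ (conj z)⟩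

theorem norm_eq_one_of_conj_mul_add_involutive {ι : Type*} [Finite ι] (b : Module.Basis ι ℝ ℂ)
    {α β : ℂ} (h : ∀ z, α * conj (α * conj z + β) + β - z ∈ span ℤ (range b)) : ‖α‖ = 1 := by
  have h10 := ZSpan.apply_eq_apply_of_continuous b (by fun_prop) h 1 0
  have hαα : (‖α‖ : ℂ) ^ 2 = 1 := by
    rw [← mul_conj']
    simp only [map_add, map_mul, map_one, map_zero] at h10
    linear_combination h10
  exact (pow_eq_one_iff_of_nonneg (norm_nonneg α) two_ne_zero).mp (by exact_mod_cast hαα)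

theorem exists_norm_eq_one_mul_eq_conj {α : ℂ} (hα : ‖α‖ = 1) :
    ∃ u : ℂ, ‖u‖ = 1 ∧ u * α = conj u := by
  obtain ⟨u, hu⟩ := IsAlgClosed.exists_pow_nat_eq (conj α) two_pos
  have hu1 : ‖u‖ = 1 := by
    rw [← pow_left_inj₀ (norm_nonneg u) zero_le_one two_ne_zero, ← norm_pow, hu, RCLike.norm_conj,
      hα, one_pow]
  have hαα : α * conj α = 1 := by simp [mul_conj', hα]
  have huu : u * conj u = 1 := by simp [mul_conj', hu1]
  refine ⟨u, hu1, mul_left_cancel₀ (by rintro rfl; simp at hu1 : u ≠ 0) ?_⟩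
  linear_combination α * hu + hαα - huu

theorem mul_mul_conj_div_add {u α β : ℂ} (hu0 : u ≠ 0) (huα : u * α = conj u) (z : ℂ) :
    u * (α * conj (z / u) + β) = conj z + u * β := by
  have hu0' : conj u ≠ 0 := (map_ne_zero _).mpr hu0
  rw [mul_add, ← mul_assoc, huα, map_div₀, mul_div_cancel₀ _ hu0']

theorem Module.Basis.exists_im_mul_ne_zero {ι : Type*} (b : Module.Basis ι ℝ ℂ) {u : ℂ}
    (hu : u ≠ 0) : ∃ i, (u * b i).im ≠ 0 := by
  by_contra! h
  have : imLm ∘ₗ LinearMap.mulLeft ℝ u = 0 := b.ext fun i => by simpa using h i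
  have hIu := LinearMap.congr_fun this (I / u)
  simp only [LinearMap.comp_apply, LinearMap.mulLeft_apply, mul_div_cancel₀ _ hu] at hIu
  simp at hIu

theorem exists_pos_forall_ofReal_mul_mem_iff {L : AddSubgroup ℂ} {ε : ℝ} (hε : 0 < ε)
    (hgap : ∀ w ∈ L, w ≠ 0 → ε ≤ ‖w‖) {e : ℂ} (he : ‖e‖ = 1) {x₀ : ℝ} (hx₀ : x₀ ≠ 0)
    (hmem : (x₀ : ℂ) * e ∈ L) : ∃ s > 0, ∀ x : ℝ, (x : ℂ) * e ∈ L ↔ ∃ n : ℤ, x = n * s := by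
  let H := L.comap ((AddMonoidHom.mulRight e).comp Complex.ofRealHom.toAddMonoidHom)
  have hH : ∀ x, x ∈ H ↔ (x : ℂ) * e ∈ L := fun x => Iff.rfl
  have he0 : e ≠ 0 := norm_ne_zero_iff.mp (by rw [he]; exact one_ne_zero)
  obtain ⟨s, hs, hHs⟩ := AddSubgroup.exists_pos_eq_zmultiples (H := H) hε
    (fun x hx hx0 => by simpa [he] using hgap _ ((hH x).1 hx) (by simpa [he0] using hx0))
    (fun h => hx₀ (by simpa [h] using (hH x₀).2 hmem))
  refine ⟨s, hs, fun x => ?_⟩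
  rw [← hH, hHs, AddSubgroup.mem_zmultiples_iff]
  simp [eq_comm]

theorem re_ne_of_conj_add_sub_notMem {L : Set ℂ} {β : ℂ}
    (hfree : ∀ z, conj z + β - z ∉ L) {w : ℂ} (hw : w ∈ L) : w.re ≠ β.re := by
  intro h
  refine hfree (I * (β.im - w.im) / 2) ?_
  convert hw using 1
  simp only [map_div₀, map_mul, map_sub, conj_I, conj_ofReal, map_ofNat]
  linear_combination -(re_add_im β) + re_add_im w - congrArg ofReal h

theorem exists_forall_re_eq_int_mul_of_conj_add_sub_notMem {L : AddSubgroup ℂ} {ε : ℝ} (hε : 0 < ε)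
    (hgap : ∀ w ∈ L, w ≠ 0 → ε ≤ ‖w‖) (hconj : ∀ w ∈ L, conj w ∈ L) {β : ℂ}
    (hβ : β + conj β ∈ L) (hfree : ∀ z, conj z + β - z ∉ L) :
    ∃ s > (0 : ℝ), ∃ m₀ : ℤ, 2 * β.re = (2 * m₀ + 1) * s ∧ (∀ m : ℤ, ((m * s : ℝ) : ℂ) ∈ L) ∧
      ∀ w ∈ L, ∃ m : ℤ, w.re = m * s := by
  have hre := fun w (hw : w ∈ L) => re_ne_of_conj_add_sub_notMem hfree hw
  have htwo : ∀ w ∈ L, ((2 * w.re : ℝ) : ℂ) ∈ L := fun w hw => by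
    rw [← add_conj]; exact L.add_mem hw (hconj w hw)
  have hβre : ((2 * β.re : ℝ) : ℂ) ∈ L := by rwa [← add_conj]
  obtain ⟨s, hs, hS⟩ := exists_pos_forall_ofReal_mul_mem_iff hε hgap (e := 1) norm_one
    (x₀ := 2 * β.re) (by simpa using (hre 0 L.zero_mem).symm) (by simpa using hβre)
  simp only [mul_one] at hS
  have hreal : ∀ m : ℤ, ((m * s : ℝ) : ℂ) ∈ L := fun m => (hS _).2 ⟨m, rfl⟩
  obtain ⟨k₀, hk₀⟩ := (hS _).1 hβre
  obtain ⟨m₀, rfl | rfl⟩ := Int.even_or_odd' k₀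
  · exact absurd (by push_cast at hk₀; simp only [ofReal_re]; linarith) (hre _ (hreal m₀))
  refine ⟨s, hs, m₀, by rw [hk₀]; push_cast; ring, hreal, fun w hw => ?_⟩
  obtain ⟨k, hk⟩ := (hS _).1 (htwo w hw)
  obtain ⟨m, rfl | rfl⟩ := Int.even_or_odd' k
  · exact ⟨m, by push_cast at hk; linarith⟩
  · refine absurd ?_ (hre _ (L.add_mem hw (hreal (m₀ - m))))
    rw [add_re, ofReal_re]
    push_cast at hk hk₀ ⊢
    linarith

theorem exists_rectangular_of_conj_add_sub_notMem {L : AddSubgroup ℂ} {ε : ℝ} (hε : 0 < ε)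
    (hgap : ∀ w ∈ L, w ≠ 0 → ε ≤ ‖w‖) (hconj : ∀ w ∈ L, conj w ∈ L)
    (him : ∃ w ∈ L, w.im ≠ 0) {β : ℂ} (hβ : β + conj β ∈ L)
    (hfree : ∀ z, conj z + β - z ∉ L) :
    ∃ s > (0 : ℝ), ∃ m₀ : ℤ, 2 * β.re = (2 * m₀ + 1) * s ∧ ∃ r > (0 : ℝ),
      (L : Set ℂ) = (fun z => (s : ℂ) * z) '' {z | ∃ m n : ℤ, z = m + n * (I * r)} := by
  obtain ⟨s, hs, m₀, hm₀, hreal, hre⟩ :=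
    exists_forall_re_eq_int_mul_of_conj_add_sub_notMem hε hgap hconj hβ hfree
  obtain ⟨w₀, hw₀, hw₀im⟩ := him
  obtain ⟨t, ht, hT⟩ := exists_pos_forall_ofReal_mul_mem_iff hε hgap (e := I) norm_I
    (x₀ := 2 * w₀.im) (by simpa using hw₀im)
    (by rw [← sub_conj]; exact L.sub_mem hw₀ (hconj w₀ hw₀))
  have hs0 : (s : ℂ) ≠ 0 := ofReal_ne_zero.mpr hs.ne'
  refine ⟨s, hs, m₀, hm₀, t / s, div_pos ht hs, Set.ext fun w => ⟨fun hw => ?_, ?_⟩⟩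
  · obtain ⟨m, hm⟩ := hre w hw
    have hwre : (w.re : ℂ) = m * s := by exact_mod_cast hm
    have him : ((w.im : ℝ) : ℂ) * I ∈ L := by
      convert L.sub_mem hw (hreal m) using 1
      push_cast
      linear_combination re_add_im w - hwre
    obtain ⟨n, hn⟩ := (hT _).1 him
    refine ⟨m + n * (I * (t / s : ℝ)), ⟨m, n, rfl⟩, ?_⟩
    rw [ofReal_div, ← re_add_im w, hwre, hn]
    push_cast
    field_simp
  · rintro ⟨-, ⟨m, n, rfl⟩, rfl⟩
    rw [SetLike.mem_coe]
    convert L.add_mem (hreal m) ((hT (n * t)).2 ⟨n, rfl⟩) using 1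
    push_cast
    field_simp

theorem image_div_mul_eq_of_image_mul_eq {K : Type*} [Field K] {S R : Set K} {u s : K}
    (hs : s ≠ 0) (h : (fun z => u * z) '' S = (fun z => s * z) '' R) :
    (fun z => u / s * z) '' S = R := by
  calc (fun z => u / s * z) '' S = (fun z => s⁻¹ * z) '' ((fun z => u * z) '' S) := by
        simp only [image_image, div_eq_inv_mul, mul_assoc]
    _ = R := by simp [h, image_image, hs]

theorem exists_mul_image_eq_rectangular {ι : Type*} [Fintype ι] (b : Module.Basis ι ℝ ℂ)
    {α β : ℂ} (hα : ‖α‖ = 1) (hαL : ∀ w ∈ span ℤ (range b), α * conj w ∈ span ℤ (range b))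
    (hβ : α * conj β + β ∈ span ℤ (range b))
    (hfree : ∀ z, α * conj z + β - z ∉ span ℤ (range b)) :
    ∃ a : ℂ, a ≠ 0 ∧ a * α = conj a ∧ ∃ m₀ : ℤ, 2 * (a * β).re = 2 * m₀ + 1 ∧
      ∃ r > (0 : ℝ),
        (fun z => a * z) '' span ℤ (range b) = {z | ∃ m n : ℤ, z = m + n * (I * r)} := by
  obtain ⟨u, hu1, huα⟩ := exists_norm_eq_one_mul_eq_conj hα
  have hu0 : u ≠ 0 := norm_ne_zero_iff.mp (by simp [hu1])
  let L' := (span ℤ (range b)).toAddSubgroup.map (AddMonoidHom.mulLeft u)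
  have hL' : ∀ γ ∈ span ℤ (range b), u * γ ∈ L' := fun γ hγ => ⟨γ, hγ, rfl⟩
  obtain ⟨ε, hε, hgap⟩ := (span ℤ (range b)).toAddSubgroup.exists_pos_norm_le_of_discreteTopology
  have hgap' : ∀ w ∈ L', w ≠ 0 → ε ≤ ‖w‖ := by
    rintro - ⟨γ, hγ, rfl⟩ hγ0
    simpa [hu1] using hgap γ hγ (by rintro rfl; simp at hγ0)
  have hconj' : ∀ w ∈ L', conj w ∈ L' := by
    rintro - ⟨γ, hγ, rfl⟩
    simpa [← huα, mul_assoc] using hL' _ (hαL γ hγ)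
  have him' : ∃ w ∈ L', w.im ≠ 0 := by
    obtain ⟨i, hi⟩ := b.exists_im_mul_ne_zero hu0
    exact ⟨_, hL' _ (subset_span (mem_range_self i)), hi⟩
  have hβ' : u * β + conj (u * β) ∈ L' := by
    convert hL' _ hβ using 1
    rw [map_mul, ← huα]; ring
  have hfree' : ∀ z, conj z + u * β - z ∉ L' := by
    rintro z ⟨γ, hγ, h⟩
    have hγ' : α * conj (z / u) + β - z / u = γ := mul_left_cancel₀ hu0 <| by
      rw [mul_sub, mul_mul_conj_div_add hu0 huα, mul_div_cancel₀ _ hu0]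
      exact h.symm
    exact hfree (z / u) (hγ' ▸ hγ)
  obtain ⟨s, hs, m₀, hm₀, r, hr, hrect⟩ :=
    exists_rectangular_of_conj_add_sub_notMem hε hgap' hconj' him' hβ' hfree'
  have hs0 : (s : ℂ) ≠ 0 := ofReal_ne_zero.mpr hs.ne'
  refine ⟨u / s, div_ne_zero hu0 hs0, by rw [map_div₀, conj_ofReal, div_mul_eq_mul_div, huα],
    m₀, ?_, r, hr, image_div_mul_eq_of_image_mul_eq hs0 ?_⟩
  · rw [div_mul_eq_mul_div, div_ofReal_re, mul_div_assoc', hm₀, mul_div_cancel_right₀ _ hs.ne']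
  · rw [← hrect]
    simp [L']

theorem mul_conj_div_add_eq {a α β c : ℂ} (ha0 : a ≠ 0) (haα : a * α = conj a) {m₀ : ℤ}
    (hm₀ : 2 * (a * β).re = 2 * m₀ + 1) (hc : c = -(I * (a * β).im / 2)) (z : ℂ) :
    a * (α * conj ((z - c) / a) + β) + c - (conj z + 1 / 2) = m₀ := by
  rw [mul_mul_conj_div_add ha0 haα, hc]
  simp only [map_sub, map_div₀, map_neg, map_mul, conj_I, conj_ofReal, map_ofNat]
  have hm₀' : 2 * ((a * β).re : ℂ) = 2 * m₀ + 1 := by exact_mod_cast hm₀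
  linear_combination (-1 : ℂ) * re_add_im (a * β) + hm₀' / 2

theorem stmt_11 (Γ : Set ℂ)
    (hΓ : ∃ ω ω' : ℂ, LinearIndependent ℝ ![ω, ω'] ∧
      Γ = {z : ℂ | ∃ m n : ℤ, z = m * ω + n * ω'})
    (I : ℂ → ℂ)
    (hent : Differentiable ℂ (fun z => I (starRingEnd ℂ z)))
    (hper : ∀ z : ℂ, ∀ ω ∈ Γ, I (z + ω) - I z ∈ Γ)
    (hinv : ∀ z : ℂ, I (I z) - z ∈ Γ)
    (hfree : ∀ z : ℂ, I z - z ∉ Γ) :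
    ∃ r : ℝ, 0 < r ∧ ∃ a c : ℂ, a ≠ 0 ∧
      (fun z => a * z) '' Γ = {z : ℂ | ∃ m n : ℤ, z = m + n * (Complex.I * r)} ∧
      ∀ z : ℂ, a * I ((z - c) / a) + c - (starRingEnd ℂ z + 1/2)
        ∈ {z : ℂ | ∃ m n : ℤ, z = m + n * (Complex.I * r)} := by
  obtain ⟨ω, ω', hli, rfl⟩ := hΓ
  let b := basisOfLinearIndependentOfCardEqFinrank hli (by simp)
  have hΓ : {z : ℂ | ∃ m n : ℤ, z = m * ω + n * ω'} = span ℤ (range b) := by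
    rw [← coe_span_int_pair]
    simp only [b, coe_basisOfLinearIndependentOfCardEqFinrank, Matrix.range_cons,
      Matrix.range_empty, union_empty, singleton_union]
  rw [hΓ] at hper hinv hfree ⊢
  obtain ⟨α, β, hI⟩ := exists_eq_mul_conj_add b hent hper
  simp only [hI] at hper hinv hfree ⊢
  obtain ⟨a, ha0, haα, m₀, hm₀, r, hr, himage⟩ := exists_mul_image_eq_rectangular b
    (norm_eq_one_of_conj_mul_add_involutive b hinv) (fun w hw => by simpa using hper 0 w hw)
    (by simpa using hinv 0) hfree
  refine ⟨r, hr, a, -(Complex.I * (a * β).im / 2), ha0, himage, fun z => ⟨m₀, 0, ?_⟩⟩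
  rw [mul_conj_div_add_eq ha0 haα hm₀ rfl]
  simp
end

section
/- Let r > 0 and let Γ_r = {m + n·i·r : m, n ∈ ℤ} be the rectangular lattice generated by (1, ir). Then there exists a nonconstant function g that is meromorphic on all of ℂ, is doubly periodic with respect to Γ_r (g(z + ω) = g(z) for all z and all ω ∈ Γ_r at points where g is defined), whose poles in the fundamental domain [0,1) × [0,r) have total order 4 (counted with multiplicity), and which satisfies g(conj(z) + 1/2) = −1/conj(g(z)) for every z ∈ ℂ at which g is analytic with g(z) ≠ 0 and at which g is analytic at conj(z) + 1/2. -/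
/-!
Put `e z = exp (2πiz)` and `q = e τ` with `τ = i r`. The product
`θ z = (1 - e z) ∏_{n ≥ 1} (1 - qⁿ e z) (1 - qⁿ e (-z))` is entire, vanishes simply exactly
on the lattice `ℤ + τℤ`, and satisfies `θ (z + 1) = θ z`, `θ (z + τ) = -e (-z) θ z`.
Hence `B z = θ z ^ 3 θ (z - τ/2)` has a triple zero at `0` and a simple zero at `τ/2`, and
picks up the factor `e (τ/2 - 4z)` under `z ↦ z + τ`. This factor is unchanged by
`z ↦ z + 1/2`, so `g z = i B (z + 1/2) / B z` is elliptic, with poles of total order `4` per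
cell. As `B` has period `1`, `g (z + 1/2) = -1 / g z`; and since `q` is real, conjugation
turns `B` into itself up to an exponential factor that cancels in `g`, so
`g (conj z) = conj (g z)`.
-/

open Complex
open scoped Real ComplexConjugate

noncomputable section

section Meromorphic

variable {𝕜 E : Type*} [NontriviallyNormedField 𝕜] [NormedAddCommGroup E] [NormedSpace 𝕜 E]

lemma AnalyticAt.meromorphicOrderAt_eq_zero {f : 𝕜 → E} {x : 𝕜} (hf : AnalyticAt 𝕜 f x)
    (hx : f x ≠ 0) : meromorphicOrderAt f x = 0 := by
  rw [hf.meromorphicOrderAt_eq, hf.analyticOrderAt_eq_zero.2 hx]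
  rfl

lemma MeromorphicAt.exists_analyticAt_ne_zero [CompleteSpace E] {f : 𝕜 → E} {x : 𝕜}
    (hf : MeromorphicAt f x) (h : meromorphicOrderAt f x ≠ ⊤) :
    ∃ z, AnalyticAt 𝕜 f z ∧ f z ≠ 0 :=
  (hf.eventually_analyticAt.and ((meromorphicOrderAt_ne_top_iff_eventually_ne_zero hf).1 h)).exists

end Meromorphic

namespace ThetaQuotient

def e (z : ℂ) : ℂ := cexp (2 * π * I * z)

lemma e_add (a b : ℂ) : e (a + b) = e a * e b := by
  rw [e, e, e, ← Complex.exp_add]; ring_nf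

lemma e_ne_zero (z : ℂ) : e z ≠ 0 := Complex.exp_ne_zero _

@[simp] lemma e_zero : e 0 = 1 := by simp [e]

lemma e_mul_e_neg (z : ℂ) : e z * e (-z) = 1 := by
  rw [← e_add, add_neg_cancel, e_zero]

lemma e_eq_one_iff {z : ℂ} : e z = 1 ↔ ∃ m : ℤ, z = m := by
  have h2πi : 2 * π * I ≠ 0 := by simp [Real.pi_ne_zero, I_ne_zero]
  rw [e, Complex.exp_eq_one_iff]
  refine exists_congr fun m => ?_
  rw [mul_comm (m : ℂ), mul_right_inj' h2πi]

lemma e_intCast (m : ℤ) : e m = 1 := e_eq_one_iff.2 ⟨m, rfl⟩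

lemma e_add_intCast (z : ℂ) (m : ℤ) : e (z + m) = e z := by
  rw [e_add, e_intCast, mul_one]

lemma e_half : e (1 / 2) = -1 := by
  rw [e, show 2 * (π : ℂ) * I * (1 / 2) = π * I by ring, Complex.exp_pi_mul_I]

lemma e_natCast_mul (n : ℕ) (z : ℂ) : e (n * z) = e z ^ n := by
  rw [e, e, ← Complex.exp_nat_mul]; ring_nf

lemma conj_e (z : ℂ) : conj (e z) = e (-conj z) := by
  rw [e, e, ← Complex.exp_conj]
  simp only [map_mul, map_ofNat, Complex.conj_ofReal, Complex.conj_I]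
  ring_nf

lemma norm_e_lt_one {τ : ℂ} (hτ : 0 < τ.im) : ‖e τ‖ < 1 := by
  rw [e, Complex.norm_exp, Real.exp_lt_one_iff]
  simpa using mul_pos Real.two_pi_pos hτ

lemma hasDerivAt_e (z : ℂ) : HasDerivAt e (2 * π * I * e z) z := by
  have h := ((hasDerivAt_id z).const_mul (2 * π * I)).cexp
  simp only [id, mul_one] at h
  exact h.congr_deriv (mul_comm _ _)

lemma differentiable_e : Differentiable ℂ e := fun z => (hasDerivAt_e z).differentiableAt

def qProd (q v : ℂ) : ℂ := ∏' n : ℕ, (1 - q ^ (n + 1) * v)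

section qProd

variable {q : ℂ}

lemma summable_norm_pow_succ (hq : ‖q‖ < 1) : Summable fun n : ℕ => ‖q‖ ^ (n + 1) :=
  (summable_nat_add_iff 1).2 (summable_geometric_of_lt_one (norm_nonneg q) hq)

lemma multipliable_qProd (hq : ‖q‖ < 1) (v : ℂ) :
    Multipliable fun n : ℕ => 1 - q ^ (n + 1) * v := by
  simp_rw [sub_eq_add_neg]
  refine multipliable_one_add_of_summable ?_
  simpa [norm_mul, norm_pow] using (summable_norm_pow_succ hq).mul_right ‖v‖

lemma qProd_eq_mul (hq : ‖q‖ < 1) (v : ℂ) : qProd q v = (1 - q * v) * qProd q (q * v) := by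
  have hshift : (fun n : ℕ => 1 - q ^ (n + 1 + 1) * v) = fun n => 1 - q ^ (n + 1) * (q * v) := by
    ext n; ring
  rw [qProd, qProd, tprod_eq_zero_mul' (hshift ▸ multipliable_qProd hq (q * v)), hshift,
    zero_add, pow_one]

lemma qProd_eq_zero_iff (hq : ‖q‖ < 1) {v : ℂ} :
    qProd q v = 0 ↔ ∃ n : ℕ, q ^ (n + 1) * v = 1 := by
  refine ⟨fun h => ?_, fun ⟨n, hn⟩ => tprod_of_exists_eq_zero ⟨n, by rw [hn, sub_self]⟩⟩
  by_contra! hne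
  refine tprod_one_add_ne_zero_of_summable (f := fun n => -(q ^ (n + 1) * v)) (fun n => ?_) ?_ h
  · rw [← sub_eq_add_neg, sub_ne_zero]; exact (hne n).symm
  · simpa [norm_mul, norm_pow] using (summable_norm_pow_succ hq).mul_right ‖v‖

lemma qProd_one_ne_zero (hq : ‖q‖ < 1) : qProd q 1 ≠ 0 := by
  rw [Ne, qProd_eq_zero_iff hq]
  rintro ⟨n, hn⟩
  have := pow_lt_one₀ (norm_nonneg q) hq (Nat.succ_ne_zero n)
  rw [← norm_pow, ← mul_one (q ^ (n + 1)), hn, norm_one] at this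
  exact this.false

lemma differentiable_qProd (hq : ‖q‖ < 1) : Differentiable ℂ (qProd q) := by
  have hprod : HasProdLocallyUniformlyOn (fun n v => 1 - q ^ (n + 1) * v) (qProd q) Set.univ := by
    simp_rw [sub_eq_add_neg]
    refine hasProdLocallyUniformlyOn_of_forall_compact isOpen_univ fun K _ hK => ?_
    obtain ⟨R, hR⟩ := hK.isBounded.exists_norm_le
    refine ((summable_norm_pow_succ hq).mul_right R).hasProdUniformlyOn_nat_one_add hK
      (.of_forall fun n v hv => ?_) fun n => by fun_prop
    rw [norm_neg, norm_mul, norm_pow]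
    exact mul_le_mul_of_nonneg_left (hR v hv) (by positivity)
  rw [← differentiableOn_univ]
  exact hprod.differentiableOn (.of_forall fun s => by fun_prop) isOpen_univ

end qProd

lemma conj_qProd (q v : ℂ) : conj (qProd q v) = qProd (conj q) (conj v) := by
  rw [qProd, qProd, Function.LeftInverse.map_tprod _ Complex.continuous_conj
    Complex.continuous_conj Complex.conj_conj]
  simp

/-- By the Jacobi triple product, this is `θ₁` up to a nowhere vanishing factor. -/
def theta (τ z : ℂ) : ℂ := (1 - e z) * qProd (e τ) (e z) * qProd (e τ) (e (-z))

section theta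

variable {τ : ℂ}

lemma differentiable_theta (hτ : 0 < τ.im) : Differentiable ℂ (theta τ) := by
  have := differentiable_qProd (norm_e_lt_one hτ)
  have := differentiable_e
  unfold theta
  fun_prop

lemma analyticAt_theta (hτ : 0 < τ.im) (z : ℂ) : AnalyticAt ℂ (theta τ) z :=
  (differentiable_theta hτ).analyticAt z

lemma theta_add_one (z : ℂ) : theta τ (z + 1) = theta τ z := by
  have h₁ : e (z + 1) = e z := by exact_mod_cast e_add_intCast z 1
  have h₂ : e (-(z + 1)) = e (-z) := by
    rw [neg_add]; exact_mod_cast e_add_intCast (-z) (-1)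
  rw [theta, theta, h₁, h₂]

lemma theta_add_tau (hτ : 0 < τ.im) (z : ℂ) : theta τ (z + τ) = -e (-z) * theta τ z := by
  have hq := norm_e_lt_one hτ
  have h₁ : e (z + τ) = e τ * e z := by rw [e_add, mul_comm]
  have h₂ : e τ * e (-(z + τ)) = e (-z) := by rw [← e_add]; congr 1; ring
  have h₃ := qProd_eq_mul hq (e z)
  have h₄ := qProd_eq_mul hq (e (-(z + τ)))
  rw [h₂] at h₄
  rw [theta, theta, h₁, h₄]
  linear_combination (-(1 - e (-z)) * qProd (e τ) (e (-z))) * h₃ -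
    (qProd (e τ) (e z) * qProd (e τ) (e (-z))) * e_mul_e_neg z

lemma theta_neg (z : ℂ) : theta τ (-z) = -e (-z) * theta τ z := by
  rw [theta, theta, neg_neg]
  linear_combination -(qProd (e τ) (e z) * qProd (e τ) (e (-z))) * e_mul_e_neg z

lemma conj_theta (z : ℂ) : conj (theta τ z) = theta (-conj τ) (-conj z) := by
  simp only [theta, map_mul, map_sub, map_one, conj_qProd, conj_e, map_neg, neg_neg]

lemma qProd_e_eq_zero_iff (hτ : 0 < τ.im) (u : ℂ) :
    qProd (e τ) (e u) = 0 ↔ ∃ n : ℕ, ∃ m : ℤ, u = m - (n + 1) * τ := by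
  rw [qProd_eq_zero_iff (norm_e_lt_one hτ)]
  refine exists_congr fun n => ?_
  rw [← e_natCast_mul, ← e_add, e_eq_one_iff]
  refine exists_congr fun m => ?_
  push_cast
  constructor <;> intro h <;> linear_combination h

lemma theta_eq_zero_iff (hτ : 0 < τ.im) {z : ℂ} :
    theta τ z = 0 ↔ ∃ m n : ℤ, z = m + n * τ := by
  constructor
  · intro h
    rw [theta, mul_eq_zero, mul_eq_zero, sub_eq_zero, qProd_e_eq_zero_iff hτ,
      qProd_e_eq_zero_iff hτ] at h
    rcases h with (h | ⟨n, m, h⟩) | ⟨n, m, h⟩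
    · obtain ⟨m, hm⟩ := e_eq_one_iff.1 h.symm
      exact ⟨m, 0, by simp [hm]⟩
    · exact ⟨m, -(n + 1), by push_cast; linear_combination h⟩
    · exact ⟨-m, n + 1, by push_cast; linear_combination -h⟩
  · rintro ⟨m, n, rfl⟩
    rcases n with (_ | n) | n
    · refine mul_eq_zero_of_left (mul_eq_zero_of_left (sub_eq_zero.2 ?_) _) _
      exact (e_eq_one_iff.2 ⟨m, by simp⟩).symm
    · refine mul_eq_zero_of_right _ ((qProd_e_eq_zero_iff hτ _).2 ⟨n, -m, ?_⟩)
      rw [Int.ofNat_eq_natCast]; push_cast; ring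
    · refine mul_eq_zero_of_left
        (mul_eq_zero_of_right _ ((qProd_e_eq_zero_iff hτ _).2 ⟨n, m, ?_⟩)) _
      rw [Int.cast_negSucc]; push_cast; ring

lemma intCast_add_intCast_mul_inj (hτ : τ.im ≠ 0) {a b c d : ℤ}
    (h : (a : ℂ) + b * τ = c + d * τ) : a = c ∧ b = d := by
  have him := congrArg Complex.im h
  have hre := congrArg Complex.re h
  simp only [add_im, add_re, mul_im, mul_re, intCast_re, intCast_im, zero_mul, add_zero,
    zero_add, sub_zero] at him hre
  have hbd : b = d := by exact_mod_cast mul_right_cancel₀ hτ him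
  subst hbd
  exact ⟨by exact_mod_cast add_right_cancel hre, rfl⟩

lemma theta_ne_zero_of_two_mul_eq (hτ : 0 < τ.im) {z : ℂ} {j k : ℤ} (h : Odd j ∨ Odd k)
    (hz : 2 * z = j + k * τ) : theta τ z ≠ 0 := by
  rw [Ne, theta_eq_zero_iff hτ]
  rintro ⟨m, n, rfl⟩
  have : (j : ℂ) + k * τ = ((2 * m : ℤ) : ℂ) + ((2 * n : ℤ) : ℂ) * τ := by
    push_cast; linear_combination -hz
  obtain ⟨rfl, rfl⟩ := intCast_add_intCast_mul_inj hτ.ne' this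
  rw [Int.odd_iff, Int.odd_iff] at h
  omega

lemma meromorphicOrderAt_theta_zero (hτ : 0 < τ.im) : meromorphicOrderAt (theta τ) 0 = 1 := by
  have hq := norm_e_lt_one hτ
  set Q := fun z => qProd (e τ) (e z) * qProd (e τ) (e (-z))
  have hsplit : theta τ = Q * fun z => 1 - e z := by
    ext z; simp only [theta, Q, Pi.mul_apply]; ring
  have hQ : AnalyticAt ℂ Q 0 := by
    have := differentiable_qProd hq
    have := differentiable_e
    exact Differentiable.analyticAt (by fun_prop) 0
  have hQ₀ : Q 0 ≠ 0 := by simpa [Q] using qProd_one_ne_zero hq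
  have hsub : AnalyticAt ℂ (fun z => 1 - e z) 0 := (differentiable_e.const_sub 1).analyticAt 0
  have hderiv : deriv (fun z => 1 - e z) 0 ≠ 0 := by
    rw [((hasDerivAt_e 0).const_sub 1).deriv]
    simp [Real.pi_ne_zero, I_ne_zero]
  rw [hsplit, meromorphicOrderAt_mul_of_ne_zero hQ hQ₀, hsub.meromorphicOrderAt_eq,
    hsub.analyticOrderAt_eq_one_of_zero_deriv_ne_zero (by simp) hderiv]
  rfl

end theta

def poleFactor (τ z : ℂ) : ℂ := theta τ z ^ 3 * theta τ (z - τ / 2)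

def ellipticFun (τ z : ℂ) : ℂ := I * poleFactor τ (z + 1 / 2) / poleFactor τ z

section ellipticFun

variable {τ : ℂ}

lemma differentiable_poleFactor (hτ : 0 < τ.im) : Differentiable ℂ (poleFactor τ) := by
  have := differentiable_theta hτ
  unfold poleFactor
  fun_prop

lemma poleFactor_add_one (z : ℂ) : poleFactor τ (z + 1) = poleFactor τ z := by
  rw [poleFactor, poleFactor, show z + 1 - τ / 2 = z - τ / 2 + 1 by ring, theta_add_one,
    theta_add_one]

lemma poleFactor_add_tau (hτ : 0 < τ.im) (z : ℂ) :
    poleFactor τ (z + τ) = e (τ / 2 - 4 * z) * poleFactor τ z := by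
  rw [poleFactor, poleFactor, theta_add_tau hτ, show z + τ - τ / 2 = z - τ / 2 + τ by ring,
    theta_add_tau hτ, show τ / 2 - 4 * z = -z + -z + -z + -(z - τ / 2) by ring, e_add, e_add,
    e_add]
  ring

lemma conj_poleFactor (hτ : 0 < τ.im) (hτc : conj τ = -τ) (z : ℂ) :
    conj (poleFactor τ z) = -e (-5 * conj z) * poleFactor τ (conj z) := by
  have hτ' : -conj τ = τ := by rw [hτc, neg_neg]
  rw [poleFactor, poleFactor, map_mul, map_pow, conj_theta, conj_theta, hτ', map_sub, map_div₀,
    map_ofNat, hτc, theta_neg, show -(conj z - -τ / 2) = -(conj z + τ / 2) by ring, theta_neg,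
    show conj z + τ / 2 = conj z - τ / 2 + τ by ring, theta_add_tau hτ,
    show -5 * conj z = -conj z + -conj z + -conj z + -(conj z - τ / 2 + τ) + -(conj z - τ / 2) by
      ring, e_add, e_add, e_add, e_add]
  ring

/-- This holds at every `z`: since `x / 0 = 0`, both sides vanish where `poleFactor τ z` or
`poleFactor τ (z + 1 / 2)` does. -/
lemma ellipticFun_add_half (z : ℂ) : ellipticFun τ (z + 1 / 2) = -1 / ellipticFun τ z := by
  rw [ellipticFun, ellipticFun, add_assoc, add_halves, poleFactor_add_one]
  simp only [div_eq_mul_inv, mul_inv, inv_I, inv_inv]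
  ring

lemma ellipticFun_add_one (z : ℂ) : ellipticFun τ (z + 1) = ellipticFun τ z := by
  rw [← add_halves (1 : ℂ), ← add_assoc, ellipticFun_add_half, ellipticFun_add_half]
  simp only [neg_div, div_neg, neg_neg, one_div_one_div]

lemma ellipticFun_add_tau (hτ : 0 < τ.im) (z : ℂ) :
    ellipticFun τ (z + τ) = ellipticFun τ z := by
  rw [ellipticFun, ellipticFun, add_right_comm, poleFactor_add_tau hτ, poleFactor_add_tau hτ,
    show τ / 2 - 4 * (z + 1 / 2) = τ / 2 - 4 * z + ((-2 : ℤ) : ℂ) by push_cast; ring,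
    e_add_intCast, mul_left_comm, mul_div_mul_left _ _ (e_ne_zero _)]

lemma ellipticFun_add_lattice (hτ : 0 < τ.im) (z : ℂ) (m n : ℤ) :
    ellipticFun τ (z + (m + n * τ)) = ellipticFun τ z := by
  have h₁ : Function.Periodic (ellipticFun τ) 1 := ellipticFun_add_one
  have hτ' : Function.Periodic (ellipticFun τ) τ := ellipticFun_add_tau hτ
  simpa using (h₁.int_mul m).add_period (hτ'.int_mul n) z

lemma conj_ellipticFun (hτ : 0 < τ.im) (hτc : conj τ = -τ) (z : ℂ) :
    ellipticFun τ (conj z) = conj (ellipticFun τ z) := by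
  have h₅ : e (-5 * (conj z + 1 / 2)) = -e (-5 * conj z) := by
    rw [show -5 * (conj z + 1 / 2) = -5 * conj z + 1 / 2 + ((-3 : ℤ) : ℂ) by push_cast; ring,
      e_add_intCast, e_add, e_half, mul_neg_one]
  rw [ellipticFun, ellipticFun, map_div₀, map_mul, conj_I, conj_poleFactor hτ hτc,
    conj_poleFactor hτ hτc, map_add, map_div₀, map_one, map_ofNat, h₅,
    ← mul_div_mul_left (I * _) _ (neg_ne_zero.2 (e_ne_zero (-5 * conj z)))]
  ring

lemma ellipticFun_conj_add_half (hτ : 0 < τ.im) (hτc : conj τ = -τ) (z : ℂ) :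
    ellipticFun τ (conj z + 1 / 2) = -1 / conj (ellipticFun τ z) := by
  rw [ellipticFun_add_half, conj_ellipticFun hτ hτc]

lemma differentiable_mul_poleFactor_add_half (hτ : 0 < τ.im) :
    Differentiable ℂ fun z => I * poleFactor τ (z + 1 / 2) := by
  have := differentiable_poleFactor hτ
  fun_prop

lemma meromorphicAt_ellipticFun (hτ : 0 < τ.im) (z : ℂ) : MeromorphicAt (ellipticFun τ) z :=
  ((differentiable_mul_poleFactor_add_half hτ).analyticAt z).meromorphicAt.div
    ((differentiable_poleFactor hτ).analyticAt z).meromorphicAt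

lemma analyticAt_ellipticFun (hτ : 0 < τ.im) {z : ℂ} (hz : poleFactor τ z ≠ 0) :
    AnalyticAt ℂ (ellipticFun τ) z :=
  ((differentiable_mul_poleFactor_add_half hτ).analyticAt z).div
    ((differentiable_poleFactor hτ).analyticAt z) hz

lemma meromorphicOrderAt_ellipticFun (hτ : 0 < τ.im) {z : ℂ}
    (hz : poleFactor τ (z + 1 / 2) ≠ 0) :
    meromorphicOrderAt (ellipticFun τ) z = -meromorphicOrderAt (poleFactor τ) z := by
  have hsplit :
      ellipticFun τ = (fun z => I * poleFactor τ (z + 1 / 2)) * (poleFactor τ)⁻¹ := by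
    ext z; simp only [ellipticFun, Pi.mul_apply, Pi.inv_apply, div_eq_mul_inv]
  rw [hsplit, meromorphicOrderAt_mul_of_ne_zero
    ((differentiable_mul_poleFactor_add_half hτ).analyticAt z) (mul_ne_zero I_ne_zero hz),
    meromorphicOrderAt_inv]

lemma meromorphicOrderAt_poleFactor (hτ : 0 < τ.im) (z : ℂ) :
    meromorphicOrderAt (poleFactor τ) z =
      3 * meromorphicOrderAt (theta τ) z + meromorphicOrderAt (theta τ) (z - τ / 2) := by
  have hθ := differentiable_theta hτ
  have hpow : MeromorphicAt (theta τ ^ 3) z := ((hθ.pow 3).analyticAt z).meromorphicAt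
  have hshift : MeromorphicAt (fun z => theta τ (z - τ / 2)) z :=
    ((hθ.comp (differentiable_id.sub_const _)).analyticAt z).meromorphicAt
  rw [show poleFactor τ = theta τ ^ 3 * fun z => theta τ (z - τ / 2) from rfl,
    meromorphicOrderAt_mul hpow hshift, meromorphicOrderAt_pow (hθ.analyticAt z).meromorphicAt,
    meromorphicOrderAt_fun_comp_sub_const_eq_meromorphicOrderAt]
  rfl

lemma poleFactor_half_ne_zero (hτ : 0 < τ.im) : poleFactor τ (1 / 2) ≠ 0 :=
  mul_ne_zero (pow_ne_zero _ (theta_ne_zero_of_two_mul_eq hτ (j := 1) (k := 0) (by decide)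
    (by push_cast; ring))) (theta_ne_zero_of_two_mul_eq hτ (j := 1) (k := -1) (by decide)
    (by push_cast; ring))

lemma poleFactor_half_tau_add_half_ne_zero (hτ : 0 < τ.im) :
    poleFactor τ (τ / 2 + 1 / 2) ≠ 0 :=
  mul_ne_zero (pow_ne_zero _ (theta_ne_zero_of_two_mul_eq hτ (j := 1) (k := 1) (by decide)
    (by push_cast; ring))) (theta_ne_zero_of_two_mul_eq hτ (j := 1) (k := 0) (by decide)
    (by push_cast; ring))

lemma meromorphicOrderAt_ellipticFun_zero (hτ : 0 < τ.im) :
    meromorphicOrderAt (ellipticFun τ) 0 = -3 := by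
  have hB : poleFactor τ (0 + 1 / 2) ≠ 0 := by rw [zero_add]; exact poleFactor_half_ne_zero hτ
  rw [meromorphicOrderAt_ellipticFun hτ hB, meromorphicOrderAt_poleFactor hτ,
    meromorphicOrderAt_theta_zero hτ, (analyticAt_theta hτ _).meromorphicOrderAt_eq_zero
      (theta_ne_zero_of_two_mul_eq hτ (j := 0) (k := -1) (by decide) (by push_cast; ring))]
  rfl

lemma meromorphicOrderAt_ellipticFun_half_tau (hτ : 0 < τ.im) :
    meromorphicOrderAt (ellipticFun τ) (τ / 2) = -1 := by
  rw [meromorphicOrderAt_ellipticFun hτ (poleFactor_half_tau_add_half_ne_zero hτ),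
    meromorphicOrderAt_poleFactor hτ, sub_self,
    meromorphicOrderAt_theta_zero hτ, (analyticAt_theta hτ _).meromorphicOrderAt_eq_zero
      (theta_ne_zero_of_two_mul_eq hτ (j := 0) (k := 1) (by decide) (by push_cast; ring))]
  rfl

lemma exists_analyticAt_ellipticFun_ne (hτ : 0 < τ.im) :
    ∃ z w, AnalyticAt ℂ (ellipticFun τ) z ∧ AnalyticAt ℂ (ellipticFun τ) w ∧
      ellipticFun τ z ≠ ellipticFun τ w := by
  have hzero : ellipticFun τ (1 / 2) = 0 := by
    have hθ : theta τ 0 = 0 := (theta_eq_zero_iff hτ).2 ⟨0, 0, by simp⟩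
    rw [ellipticFun, add_halves, ← zero_add 1, poleFactor_add_one, poleFactor, hθ]
    simp
  obtain ⟨w, hw, hw₀⟩ := (meromorphicAt_ellipticFun hτ 0).exists_analyticAt_ne_zero
    (by rw [meromorphicOrderAt_ellipticFun_zero hτ]; exact WithTop.coe_ne_top)
  exact ⟨1 / 2, w, analyticAt_ellipticFun hτ (poleFactor_half_ne_zero hτ), hw,
    hzero ▸ hw₀.symm⟩

end ellipticFun

lemma int_eq_zero_of_add_mul_mem_Ico {r t : ℝ} (hr : 0 < r) (ht : t ∈ Set.Ico (0 : ℝ) 1)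
    {n : ℤ} (h : ((n : ℝ) + t) * r ∈ Set.Ico 0 r) : n = 0 := by
  obtain ⟨ht₀, ht₁⟩ := ht
  obtain ⟨h₀, h₁⟩ := h
  have hlo : (-1 : ℝ) < n := by nlinarith
  have hhi : (n : ℝ) < 1 := by nlinarith
  have : -1 < n := by exact_mod_cast hlo
  have : n < 1 := by exact_mod_cast hhi
  omega

lemma setOf_meromorphicOrderAt_ellipticFun_neg {r : ℝ} (hr : 0 < r) :
    {z : ℂ | z.re ∈ Set.Ico (0 : ℝ) 1 ∧ z.im ∈ Set.Ico (0 : ℝ) r ∧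
      meromorphicOrderAt (ellipticFun (I * r)) z < 0} = {0, I * r / 2} := by
  have hτ : 0 < (I * r : ℂ).im := by simpa using hr
  ext z
  simp only [Set.mem_ofPred_eq, Set.mem_insert_iff, Set.mem_singleton_iff]
  constructor
  · rintro ⟨hre, him, hneg⟩
    have hB : poleFactor (I * r) z = 0 := by
      by_contra hB
      exact (analyticAt_ellipticFun hτ hB).meromorphicOrderAt_nonneg.not_gt hneg
    rw [poleFactor, mul_eq_zero, pow_eq_zero_iff three_ne_zero, theta_eq_zero_iff hτ,
      theta_eq_zero_iff hτ] at hB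
    have hcell : ∀ (m n : ℤ) (t : ℝ), t ∈ Set.Ico (0 : ℝ) 1 →
        z = m + (n + t) * (I * r) → z = t * (I * r) := by
      rintro m n t ht rfl
      have hm : m = 0 := int_eq_zero_of_add_mul_mem_Ico one_pos (t := 0) (by simp)
        (by simpa using hre)
      have hn : n = 0 := int_eq_zero_of_add_mul_mem_Ico hr ht (by simpa using him)
      simp [hm, hn]
    rcases hB with ⟨m, n, hz⟩ | ⟨m, n, hz⟩
    · left
      simpa using hcell m n 0 (by simp) (by simpa using hz)
    · right
      rw [hcell m n (1 / 2) (by norm_num) (by rw [sub_eq_iff_eq_add.1 hz]; push_cast; ring)]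
      push_cast
      ring
  · rintro (rfl | rfl)
    · refine ⟨by simp, by simp [hr], ?_⟩
      rw [meromorphicOrderAt_ellipticFun_zero hτ]
      decide
    · refine ⟨by simp, by simp [hr, (half_pos hr).le], ?_⟩
      rw [meromorphicOrderAt_ellipticFun_half_tau hτ]
      decide

end ThetaQuotient

open ThetaQuotient in
theorem stmt_12 (r : ℝ) (hr : 0 < r)
    (Γ : Set ℂ) (hΓ : Γ = {z : ℂ | ∃ m n : ℤ, z = m + n * (Complex.I * r)}) :
    ∃ g : ℂ → ℂ, ∃ hg : MeromorphicOn g Set.univ,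
      (∃ z w : ℂ, AnalyticAt ℂ g z ∧ AnalyticAt ℂ g w ∧ g z ≠ g w) ∧
      (∀ z : ℂ, ∀ ω ∈ Γ, AnalyticAt ℂ g z → g (z + ω) = g z) ∧
      (∃ P : Finset ℂ,
        (↑P = {z : ℂ | z.re ∈ Set.Ico (0:ℝ) 1 ∧ z.im ∈ Set.Ico (0:ℝ) r ∧
          meromorphicOrderAt g z < 0}) ∧
        (∑ z ∈ P, (-(WithTop.untopD 0 (meromorphicOrderAt g z))) = 4)) ∧
      (∀ z : ℂ, AnalyticAt ℂ g z → g z ≠ 0 →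
        AnalyticAt ℂ g (starRingEnd ℂ z + 1/2) →
        g (starRingEnd ℂ z + 1/2) = -1 / starRingEnd ℂ (g z)) := by
  subst hΓ
  have hτ : 0 < (I * r : ℂ).im := by simpa using hr
  have hτc : conj (I * r : ℂ) = -(I * r) := by simp
  have hne : (0 : ℂ) ≠ I * r / 2 := fun h => by
    have := congrArg im h
    simp only [zero_im, div_ofNat_im, mul_im, I_re, ofReal_im, I_im, ofReal_re] at this
    linarith
  refine ⟨ellipticFun (I * r), fun z _ => meromorphicAt_ellipticFun hτ z,
    exists_analyticAt_ellipticFun_ne hτ, ?_, ⟨{0, I * r / 2}, ?_, ?_⟩,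
    fun z _ _ _ => ellipticFun_conj_add_half hτ hτc z⟩
  · rintro z ω ⟨m, n, rfl⟩ -
    exact ellipticFun_add_lattice hτ z m n
  · push_cast
    exact (setOf_meromorphicOrderAt_ellipticFun_neg hr).symm
  · rw [Finset.sum_pair hne, meromorphicOrderAt_ellipticFun_zero hτ,
      meromorphicOrderAt_ellipticFun_half_tau hτ]
    rfl
end
end

section
/- Let a, b, c, d ∈ ℂ with a·d − b·c ≠ 0 and let m(z) = (a·z + b)/(c·z + d). Then m commutes with the antipodal map z ↦ −1/conj(z), in the sense that m(−1/conj(z)) = −1/conj(m(z)) for every z ∈ ℂ with z ≠ 0, c·z + d ≠ 0, c·(−1/conj(z)) + d ≠ 0 and m(z) ≠ 0, if and only if there exist a₀, b₀ ∈ ℂ with |a₀|² + |b₀|² = 1 and λ ∈ ℂ, λ ≠ 0, such that (a, b, c, d) = (λ·a₀, λ·b₀, λ·conj(b₀), −λ·conj(a₀)). -/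
/-!
Write `w = conj z`. Clearing denominators, `m (-1 / conj z) = -1 / conj (m z)` becomes the
vanishing at `w` of a quadratic polynomial whose coefficients are `conj a * b + conj c * d`,
`‖b‖² + ‖d‖² - ‖a‖² - ‖c‖²` and the conjugate of the first one. It holds off a finite set, so these
coefficients vanish: the columns `(a, c)` and `(b, d)` of the matrix of `m` are orthogonal and of
equal length. Then `(b, d)` is a multiple of `(-conj c, conj a)`, and comparing determinants shows
that the matrix is `lam • !![a₀, b₀; conj b₀, -conj a₀]` with `lam` a square root of `-(a d - b c)`.
-/

open Complex ComplexConjugate Filter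

theorem eventually_cofinite_mul_add_ne_zero {K : Type*} [Field K] {u v : K}
    (h : u ≠ 0 ∨ v ≠ 0) : ∀ᶠ w in cofinite, u * w + v ≠ 0 := by
  rcases eq_or_ne u 0 with rfl | hu
  · simp [h.resolve_left (not_not.mpr rfl)]
  · filter_upwards [eventually_cofinite_ne (-v / u)] with w hw
    contrapose! hw
    field_simp
    linear_combination hw

open Polynomial in
theorem quadratic_coeffs_eq_zero_of_eventually_cofinite {R : Type*} [CommRing R] [IsDomain R]
    [Infinite R] {α β γ : R} (h : ∀ᶠ w in cofinite, α * w ^ 2 + β * w + γ = 0) :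
    α = 0 ∧ β = 0 ∧ γ = 0 := by
  have hp : C α * X ^ 2 + C β * X + C γ = 0 := by
    refine eq_zero_of_infinite_isRoot _ (frequently_cofinite_iff_infinite.mp ?_)
    simpa using h.frequently
  refine ⟨?_, ?_, ?_⟩
  · simpa using congrArg (coeff · 2) hp
  · simpa using congrArg (coeff · 1) hp
  · simpa using congrArg (coeff · 0) hp

/-- `m (-1 / conj z) + 1 / conj (m z)` at `w = conj z`, with the denominators cleared. -/
def antipodalDefect (a b c d w : ℂ) : ℂ :=
  (b * w - a) * (conj a * w + conj b) + (d * w - c) * (conj c * w + conj d)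

theorem antipodalDefect_eq_quadratic (a b c d w : ℂ) :
    antipodalDefect a b c d w = (conj a * b + conj c * d) * w ^ 2
      + ((‖b‖ ^ 2 + ‖d‖ ^ 2 - ‖a‖ ^ 2 - ‖c‖ ^ 2 : ℝ) : ℂ) * w
      + -(a * conj b + c * conj d) := by
  push_cast
  simp only [antipodalDefect, ← mul_conj']
  ring

theorem antipodal_comm_iff_antipodalDefect_eq_zero {a b c d z : ℂ} (hz : z ≠ 0)
    (hden : c * (-1 / conj z) + d ≠ 0) (hmz : (a * z + b) / (c * z + d) ≠ 0) :
    (a * (-1 / conj z) + b) / (c * (-1 / conj z) + d) = -1 / conj ((a * z + b) / (c * z + d))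
      ↔ antipodalDefect a b c d (conj z) = 0 := by
  have hz' : conj z ≠ 0 := by simpa using hz
  obtain ⟨hnum, hden_z⟩ := div_ne_zero_iff.mp hmz
  replace hnum : conj (a * z + b) ≠ 0 := (map_ne_zero _).mpr hnum
  rw [map_div₀, div_div_eq_mul_div, div_eq_div_iff hden hnum, antipodalDefect]
  simp only [map_add, map_mul] at hnum ⊢
  have hden' : d * conj z - c ≠ 0 := by
    contrapose! hden; field_simp; linear_combination hden
  constructor
  · intro h
    field_simp at h
    linear_combination h
  · intro h
    field_simp
    linear_combination h

theorem exists_scaled_form_of_orthogonal_columns {a b c d : ℂ} (hD : a * d - b * c ≠ 0)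
    (horth : conj a * b + conj c * d = 0) (hnorm : ‖a‖ ^ 2 + ‖c‖ ^ 2 = ‖b‖ ^ 2 + ‖d‖ ^ 2) :
    ∃ a₀ b₀ lam : ℂ, ‖a₀‖ ^ 2 + ‖b₀‖ ^ 2 = 1 ∧ lam ≠ 0 ∧
      a = lam * a₀ ∧ b = lam * b₀ ∧ c = lam * conj b₀ ∧ d = -lam * conj a₀ := by
  set D := a * d - b * c
  set s := ‖a‖ ^ 2 + ‖c‖ ^ 2
  have hs_conj : (s : ℂ) = a * conj a + c * conj c := by simp [s, mul_conj']
  -- `(b, d) ⊥ (a, c)` forces `(b, d) = (D / s) • (-conj c, conj a)`.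
  have hb : b * s = -(D * conj c) := by
    rw [hs_conj]; linear_combination a * horth
  have hd : d * s = D * conj a := by
    rw [hs_conj]; linear_combination c * horth
  have hs_pos : 0 < s := by
    have hac : a ≠ 0 ∨ c ≠ 0 := by
      contrapose! hD
      simp [D, hD.1, hD.2]
    rcases hac with h | h
    · exact add_pos_of_pos_of_nonneg (by positivity) (by positivity)
    · exact add_pos_of_nonneg_of_pos (by positivity) (by positivity)
  have hbc : ‖b‖ * s = ‖D‖ * ‖c‖ := by
    simpa [abs_of_pos hs_pos] using congrArg norm hb
  have hda : ‖d‖ * s = ‖D‖ * ‖a‖ := by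
    simpa [abs_of_pos hs_pos] using congrArg norm hd
  have hsD : s = ‖D‖ := by
    have hcube : s * s ^ 2 = ‖D‖ ^ 2 * s := by
      linear_combination (‖b‖ * s + ‖D‖ * ‖c‖) * hbc + (‖d‖ * s + ‖D‖ * ‖a‖) * hda
        + s ^ 2 * hnorm
    have hsq : s ^ 2 = ‖D‖ ^ 2 := mul_left_cancel₀ hs_pos.ne' (by linear_combination hcube)
    exact (pow_left_inj₀ hs_pos.le (norm_nonneg D) two_ne_zero).mp hsq
  -- `det !![a₀, b₀; conj b₀, -conj a₀] = -1`, so `lam` must be a square root of `-D`.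
  obtain ⟨lam, hlam⟩ := IsAlgClosed.exists_eq_mul_self (-D)
  have hlam_norm : ‖lam‖ ^ 2 = s := by
    rw [hsD, sq, ← norm_mul, ← hlam, norm_neg]
  have hlam_conj : lam * conj lam = s := by rw [mul_conj']; exact_mod_cast hlam_norm
  have hlam0 : lam ≠ 0 := by
    rintro rfl; simp at hlam_norm; linarith
  have hlam0' : conj lam ≠ 0 := (map_ne_zero _).mpr hlam0
  have hs0 : (s : ℂ) ≠ 0 := by exact_mod_cast hs_pos.ne'
  have hb' : conj b * s = -(conj D * c) := by simpa using congrArg conj hb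
  have hlam' : -conj D = conj lam * conj lam := by simpa using congrArg conj hlam
  refine ⟨a / lam, b / lam, lam, ?_, hlam0, by field_simp, by field_simp, ?_, ?_⟩
  · have hbc' : ‖b‖ = ‖c‖ := by
      rw [← hsD] at hbc
      exact mul_right_cancel₀ hs_pos.ne' (by linear_combination hbc)
    rw [norm_div, norm_div, div_pow, div_pow, ← add_div, hlam_norm, hbc']
    exact div_self hs_pos.ne'
  · rw [map_div₀]
    field_simp
    apply mul_left_cancel₀ hs0
    linear_combination (-lam) * hb' - (lam * c) * hlam' - (c * conj lam) * hlam_conj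
  · rw [map_div₀]
    field_simp
    apply mul_left_cancel₀ hs0
    linear_combination conj lam * hd - (conj lam * conj a) * hlam - (lam * conj a) * hlam_conj

theorem eventually_cofinite_antipodal_nondegenerate {a b c d : ℂ} (h : a * d - b * c ≠ 0) :
    ∀ᶠ z in cofinite, z ≠ 0 ∧ c * (-1 / conj z) + d ≠ 0 ∧ (a * z + b) / (c * z + d) ≠ 0 := by
  have hab : a ≠ 0 ∨ b ≠ 0 := by contrapose! h; simp [h.1, h.2]
  have hcd : c ≠ 0 ∨ d ≠ 0 := by contrapose! h; simp [h.1, h.2]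
  have hdc : d ≠ 0 ∨ -c ≠ 0 := by rw [neg_ne_zero]; exact hcd.symm
  filter_upwards [eventually_cofinite_ne 0, eventually_cofinite_mul_add_ne_zero hab,
    eventually_cofinite_mul_add_ne_zero hcd,
    (starRingEnd ℂ).injective.tendsto_cofinite.eventually
      (eventually_cofinite_mul_add_ne_zero hdc)] with z hz hab hcd hdc
  have hz' : conj z ≠ 0 := (map_ne_zero _).mpr hz
  refine ⟨hz, ?_, div_ne_zero hab hcd⟩
  rw [show c * (-1 / conj z) + d = (d * conj z + -c) / conj z by field_simp; ring]
  exact div_ne_zero hdc hz'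

theorem stmt_13 (a b c d : ℂ) (h : a * d - b * c ≠ 0) :
    (∀ z : ℂ, z ≠ 0 → c * z + d ≠ 0 → c * (-1 / starRingEnd ℂ z) + d ≠ 0 →
      (a * z + b) / (c * z + d) ≠ 0 →
      (a * (-1 / starRingEnd ℂ z) + b) / (c * (-1 / starRingEnd ℂ z) + d)
        = -1 / starRingEnd ℂ ((a * z + b) / (c * z + d))) ↔
    (∃ a₀ b₀ lam : ℂ, ‖a₀‖ ^ 2 + ‖b₀‖ ^ 2 = 1 ∧ lam ≠ 0 ∧
      a = lam * a₀ ∧ b = lam * b₀ ∧ c = lam * starRingEnd ℂ b₀ ∧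
      d = -lam * starRingEnd ℂ a₀) := by
  constructor
  · intro hcomm
    have hdefect : ∀ᶠ w in cofinite, antipodalDefect a b c d w = 0 := by
      have hz : ∀ᶠ z in cofinite, antipodalDefect a b c d (conj z) = 0 :=
        (eventually_cofinite_antipodal_nondegenerate h).mono fun z ⟨hz, hden, hmz⟩ ↦
          (antipodal_comm_iff_antipodalDefect_eq_zero hz hden hmz).mp
            (hcomm z hz (div_ne_zero_iff.mp hmz).2 hden hmz)
      simpa using (starRingEnd ℂ).injective.tendsto_cofinite.eventually hz
    simp only [antipodalDefect_eq_quadratic] at hdefect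
    obtain ⟨horth, hnorm, -⟩ := quadratic_coeffs_eq_zero_of_eventually_cofinite hdefect
    exact exists_scaled_form_of_orthogonal_columns h horth (by linarith [ofReal_eq_zero.mp hnorm])
  · rintro ⟨a₀, b₀, lam, -, -, rfl, rfl, rfl, rfl⟩ z hz - hden hmz
    rw [antipodal_comm_iff_antipodalDefect_eq_zero hz hden hmz, antipodalDefect]
    simp only [map_mul, map_neg, conj_conj]
    ring
end

section
/- Let k ≥ 1 and let P, Q : ℝ² × ℝ² → ℝᵏ be bilinear maps that are symmetric (P(ζ,η) = P(η,ζ) for all ζ, η), tracefree (P(e₁,e₁) + P(e₂,e₂) = 0, where e₁, e₂ is the standard basis of ℝ²), and both nonzero, and likewise for Q. Then there exist S ∈ SO(2) and T ∈ O(k) such that ⟨P_{S,T}, Q⟩ > 0, where P_{S,T}(ζ,η) := T·P(S⁻¹ζ, S⁻¹η) and ⟨P_{S,T}, Q⟩ := Σ_{i,j=1,2} ⟨P_{S,T}(e_i,e_j), Q(e_i,e_j)⟩_{ℝᵏ}. -/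
/-!
A symmetric tracefree `P` is determined by `a = P(e₁,e₁)` and `b = P(e₁,e₂)`, and precomposing
with the rotation by `θ` multiplies `a + i b` by `e^{2iθ}`. Hence
`⟨P_{S,T}, Q⟩ = 2 (cos 2θ · F + sin 2θ · G)` with `F + i G = ∑ₗ conj (T a + i T b)ₗ (c + i d)ₗ`,
where `c, d` are the data of `Q`, and a suitable `θ` makes this positive as soon as
`(F, G) ≠ 0`. If `F` and `G` vanished for every `T ∈ O(k)`, then, since every matrix unit is half
a difference of two signed permutation matrices, `a_m c_l + b_m d_l = a_m d_l - b_m c_l = 0` for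
all `l, m`, which forces `(a, b) = 0` or `(c, d) = 0`.
-/

open Matrix Real

noncomputable def rotationMatrix (θ : ℝ) : Matrix (Fin 2) (Fin 2) ℝ :=
  !![cos θ, -sin θ; sin θ, cos θ]

theorem rotationMatrix_neg_mul_self (θ : ℝ) : rotationMatrix (-θ) * rotationMatrix θ = 1 := by
  simp [rotationMatrix, one_fin_two, ← sq, cos_sq_add_sin_sq, sin_sq_add_cos_sq, mul_comm]

theorem inv_rotationMatrix (θ : ℝ) : (rotationMatrix θ)⁻¹ = rotationMatrix (-θ) :=
  inv_eq_left_inv (rotationMatrix_neg_mul_self θ)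

theorem rotationMatrix_mem_orthogonalGroup (θ : ℝ) :
    rotationMatrix θ ∈ orthogonalGroup (Fin 2) ℝ := by
  have : (rotationMatrix θ)ᵀ = rotationMatrix (-θ) := by
    ext i j
    fin_cases i <;> fin_cases j <;> simp [rotationMatrix]
  rw [mem_orthogonalGroup_iff', this, rotationMatrix_neg_mul_self]

theorem det_rotationMatrix (θ : ℝ) : (rotationMatrix θ).det = 1 := by
  rw [rotationMatrix, det_fin_two_of]
  linear_combination sin_sq_add_cos_sq θ

theorem exists_pos_cos_mul_add_sin_mul {F G : ℝ} (h : F ≠ 0 ∨ G ≠ 0) :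
    ∃ φ, 0 < cos φ * F + sin φ * G := by
  set z : ℂ := ⟨F, G⟩
  have hz : z ≠ 0 := fun hz => by
    rcases h with h | h <;> apply h
    exacts [congrArg Complex.re hz, congrArg Complex.im hz]
  refine ⟨z.arg, ?_⟩
  rw [Complex.cos_arg hz, Complex.sin_arg, div_mul_eq_mul_div, div_mul_eq_mul_div, ← add_div,
    ← pow_two, ← pow_two]
  have : F ^ 2 + G ^ 2 = ‖z‖ ^ 2 := by rw [Complex.sq_norm, Complex.normSq_mk]; ring
  rw [this]
  positivity

section SymmTracefree

variable {M : Type*} [AddCommGroup M] [Module ℝ M]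

theorem apply_eq_of_symm_of_tracefree (P : (Fin 2 → ℝ) →ₗ[ℝ] (Fin 2 → ℝ) →ₗ[ℝ] M)
    (hsymm : ∀ ζ η, P ζ η = P η ζ)
    (htr : P (Pi.single 0 1) (Pi.single 0 1) + P (Pi.single 1 1) (Pi.single 1 1) = 0)
    (ζ η : Fin 2 → ℝ) :
    P ζ η = (ζ 0 * η 0 - ζ 1 * η 1) • P (Pi.single 0 1) (Pi.single 0 1) +
      (ζ 0 * η 1 + ζ 1 * η 0) • P (Pi.single 0 1) (Pi.single 1 1) := by
  have hbasis : ∀ x : Fin 2 → ℝ, x = x 0 • Pi.single 0 1 + x 1 • Pi.single 1 1 := fun x => by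
    ext i; fin_cases i <;> simp
  conv_lhs => rw [hbasis ζ, hbasis η]
  simp only [map_add, map_smul, LinearMap.add_apply, LinearMap.smul_apply]
  rw [hsymm (Pi.single 1 1), eq_neg_of_add_eq_zero_right htr]
  module

theorem ne_zero_or_ne_zero_of_ne_zero {P : (Fin 2 → ℝ) →ₗ[ℝ] (Fin 2 → ℝ) →ₗ[ℝ] M} {a b : M}
    (hP : ∀ ζ η, P ζ η = (ζ 0 * η 0 - ζ 1 * η 1) • a + (ζ 0 * η 1 + ζ 1 * η 0) • b)
    (h0 : P ≠ 0) : a ≠ 0 ∨ b ≠ 0 := by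
  by_contra! hab
  exact h0 <| LinearMap.ext₂ fun ζ η => by simp [hP, hab.1, hab.2]

end SymmTracefree

section OrthogonalSpan

variable {n : Type*} [Fintype n] [DecidableEq n]

theorem Matrix.permMatrix_mem_orthogonalGroup (σ : Equiv.Perm n) :
    σ.permMatrix ℝ ∈ orthogonalGroup n ℝ := by
  rw [mem_orthogonalGroup_iff', transpose_permMatrix, ← permMatrix_mul, mul_inv_cancel,
    permMatrix_one]

theorem Matrix.diagonal_mem_orthogonalGroup {d : n → ℝ} (hd : ∀ i, d i * d i = 1) :
    diagonal d ∈ orthogonalGroup n ℝ := by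
  rw [mem_orthogonalGroup_iff, diagonal_transpose, diagonal_mul_diagonal, funext hd, diagonal_one]

theorem exists_mem_orthogonalGroup_sub_eq_single (l m : n) :
    ∃ T₁ ∈ orthogonalGroup n ℝ, ∃ T₂ ∈ orthogonalGroup n ℝ, T₁ - T₂ = single l m 2 := by
  set d : n → ℝ := fun i => if i = l then -1 else 1
  have hd : ∀ i, d i * d i = 1 := fun i => by by_cases h : i = l <;> simp [d, h]
  let σ := Equiv.swap l m
  refine ⟨σ.permMatrix ℝ, permMatrix_mem_orthogonalGroup σ, diagonal d * σ.permMatrix ℝ,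
    Submonoid.mul_mem _ (diagonal_mem_orthogonalGroup hd) (permMatrix_mem_orthogonalGroup σ), ?_⟩
  ext i j
  rcases eq_or_ne i l with rfl | hi
  · rcases eq_or_ne m j with rfl | hj
    · norm_num [d, σ]
    · simp [d, σ, hj]
  · simp [d, σ, hi, Ne.symm hi]

theorem mul_add_mul_eq_zero_of_forall_mem_orthogonalGroup {a b c d : n → ℝ}
    (h : ∀ T ∈ orthogonalGroup n ℝ, (T *ᵥ a) ⬝ᵥ c + (T *ᵥ b) ⬝ᵥ d = 0) (l m : n) :
    a m * c l + b m * d l = 0 := by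
  obtain ⟨T₁, hT₁, T₂, hT₂, hT⟩ := exists_mem_orthogonalGroup_sub_eq_single (n := n) l m
  have h₂ := congrArg₂ (· - ·) (h T₁ hT₁) (h T₂ hT₂)
  simp only [sub_zero] at h₂
  rw [add_sub_add_comm, ← sub_dotProduct, ← sub_dotProduct, ← sub_mulVec, ← sub_mulVec, hT,
    single_mulVec_eq, single_mulVec_eq, smul_dotProduct, smul_dotProduct, single_dotProduct,
    single_dotProduct, smul_eq_mul, smul_eq_mul] at h₂
  linear_combination h₂ / 2

theorem exists_mem_orthogonalGroup_ne_zero {a b c d : n → ℝ} (hab : a ≠ 0 ∨ b ≠ 0)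
    (hcd : c ≠ 0 ∨ d ≠ 0) :
    ∃ T ∈ orthogonalGroup n ℝ,
      (T *ᵥ a) ⬝ᵥ c + (T *ᵥ b) ⬝ᵥ d ≠ 0 ∨ (T *ᵥ a) ⬝ᵥ d - (T *ᵥ b) ⬝ᵥ c ≠ 0 := by
  by_contra! h
  have hF := mul_add_mul_eq_zero_of_forall_mem_orthogonalGroup fun T hT => (h T hT).1
  have hG : ∀ l m, a m * d l - b m * c l = 0 := by
    have := mul_add_mul_eq_zero_of_forall_mem_orthogonalGroup (a := a) (b := -b) (c := d) (d := c)
      fun T hT => by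
        rw [mulVec_neg, neg_dotProduct, ← sub_eq_add_neg]
        exact (h T hT).2
    simpa [← sub_eq_add_neg] using this
  obtain ⟨m, hm⟩ : ∃ m, a m ≠ 0 ∨ b m ≠ 0 := by
    rcases hab with hab | hab <;> obtain ⟨m, hm⟩ := Function.ne_iff.mp hab
    exacts [⟨m, .inl hm⟩, ⟨m, .inr hm⟩]
  have hm₂ : a m ^ 2 + b m ^ 2 ≠ 0 := by rcases hm with hm | hm <;> positivity
  have hc : c = 0 := funext fun l => show _ = 0 from mul_left_cancel₀ hm₂ <| by
    linear_combination a m * hF l m - b m * hG l m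
  have hd : d = 0 := funext fun l => show _ = 0 from mul_left_cancel₀ hm₂ <| by
    linear_combination b m * hF l m + a m * hG l m
  rcases hcd with hcd | hcd <;> contradiction

end OrthogonalSpan

section Pairing

variable {n : Type*} [Fintype n]

theorem sum_rotated_pairing_eq {P Q : (Fin 2 → ℝ) →ₗ[ℝ] (Fin 2 → ℝ) →ₗ[ℝ] (n → ℝ)}
    {a b c d : n → ℝ}
    (hP : ∀ ζ η, P ζ η = (ζ 0 * η 0 - ζ 1 * η 1) • a + (ζ 0 * η 1 + ζ 1 * η 0) • b)
    (hQ : ∀ ζ η, Q ζ η = (ζ 0 * η 0 - ζ 1 * η 1) • c + (ζ 0 * η 1 + ζ 1 * η 0) • d)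
    (T : Matrix n n ℝ) (θ : ℝ) :
    ∑ i : Fin 2, ∑ j : Fin 2, ∑ l : n,
        (T *ᵥ P ((rotationMatrix θ)⁻¹ *ᵥ Pi.single i 1) ((rotationMatrix θ)⁻¹ *ᵥ Pi.single j 1)) l *
          Q (Pi.single i 1) (Pi.single j 1) l =
      2 * (cos (2 * θ) * ((T *ᵥ a) ⬝ᵥ c + (T *ᵥ b) ⬝ᵥ d) +
        sin (2 * θ) * ((T *ᵥ a) ⬝ᵥ d - (T *ᵥ b) ⬝ᵥ c)) := by
  have hv₀ : rotationMatrix (-θ) *ᵥ Pi.single 0 1 = ![cos θ, -sin θ] := by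
    ext i; fin_cases i <;> simp [rotationMatrix]
  have hv₁ : rotationMatrix (-θ) *ᵥ Pi.single 1 1 = ![sin θ, cos θ] := by
    ext i; fin_cases i <;> simp [rotationMatrix]
  have hdot : ∀ x y : n → ℝ, ∑ l, x l * y l = x ⬝ᵥ y := fun _ _ => rfl
  rw [inv_rotationMatrix]
  simp only [Fin.sum_univ_two, hv₀, hv₁, hP, hQ, hdot]
  simp only [cons_val_zero, cons_val_one, Pi.single_eq_same, Pi.single_eq_of_ne zero_ne_one,
    Pi.single_eq_of_ne one_ne_zero, mulVec_add, mulVec_smul, add_dotProduct, dotProduct_add,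
    smul_dotProduct, dotProduct_smul, smul_eq_mul, cos_two_mul', sin_two_mul]
  ring

end Pairing

theorem stmt_15_general (k : ℕ)
    (P Q : (Fin 2 → ℝ) →ₗ[ℝ] (Fin 2 → ℝ) →ₗ[ℝ] (Fin k → ℝ))
    (hPsymm : ∀ ζ η : Fin 2 → ℝ, P ζ η = P η ζ)
    (hQsymm : ∀ ζ η : Fin 2 → ℝ, Q ζ η = Q η ζ)
    (hPtr : P (Pi.single 0 1) (Pi.single 0 1) + P (Pi.single 1 1) (Pi.single 1 1) = 0)
    (hQtr : Q (Pi.single 0 1) (Pi.single 0 1) + Q (Pi.single 1 1) (Pi.single 1 1) = 0)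
    (hP0 : P ≠ 0) (hQ0 : Q ≠ 0) :
    ∃ S : Matrix (Fin 2) (Fin 2) ℝ, ∃ T : Matrix (Fin k) (Fin k) ℝ,
      S ∈ Matrix.orthogonalGroup (Fin 2) ℝ ∧ S.det = 1 ∧
      T ∈ Matrix.orthogonalGroup (Fin k) ℝ ∧
      0 < ∑ i : Fin 2, ∑ j : Fin 2, ∑ l : Fin k,
        T.mulVec (P (S⁻¹.mulVec (Pi.single i 1)) (S⁻¹.mulVec (Pi.single j 1))) l *
          Q (Pi.single i 1) (Pi.single j 1) l := by
  have hP := apply_eq_of_symm_of_tracefree P hPsymm hPtr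
  have hQ := apply_eq_of_symm_of_tracefree Q hQsymm hQtr
  obtain ⟨T, hT, hT₀⟩ := exists_mem_orthogonalGroup_ne_zero
    (ne_zero_or_ne_zero_of_ne_zero hP hP0) (ne_zero_or_ne_zero_of_ne_zero hQ hQ0)
  obtain ⟨φ, hφ⟩ := exists_pos_cos_mul_add_sin_mul hT₀
  refine ⟨rotationMatrix (φ / 2), T, rotationMatrix_mem_orthogonalGroup _, det_rotationMatrix _,
    hT, ?_⟩
  rw [sum_rotated_pairing_eq hP hQ, mul_div_cancel₀ φ two_ne_zero]
  positivity

theorem stmt_15 (k : ℕ) (hk : 1 ≤ k)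
    (P Q : (Fin 2 → ℝ) →ₗ[ℝ] (Fin 2 → ℝ) →ₗ[ℝ] (Fin k → ℝ))
    (hPsymm : ∀ ζ η : Fin 2 → ℝ, P ζ η = P η ζ)
    (hQsymm : ∀ ζ η : Fin 2 → ℝ, Q ζ η = Q η ζ)
    (hPtr : P (Pi.single 0 1) (Pi.single 0 1) + P (Pi.single 1 1) (Pi.single 1 1) = 0)
    (hQtr : Q (Pi.single 0 1) (Pi.single 0 1) + Q (Pi.single 1 1) (Pi.single 1 1) = 0)
    (hP0 : P ≠ 0) (hQ0 : Q ≠ 0) :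
    ∃ S : Matrix (Fin 2) (Fin 2) ℝ, ∃ T : Matrix (Fin k) (Fin k) ℝ,
      S ∈ Matrix.orthogonalGroup (Fin 2) ℝ ∧ S.det = 1 ∧
      T ∈ Matrix.orthogonalGroup (Fin k) ℝ ∧
      0 < ∑ i : Fin 2, ∑ j : Fin 2, ∑ l : Fin k,
        T.mulVec (P (S⁻¹.mulVec (Pi.single i 1)) (S⁻¹.mulVec (Pi.single j 1))) l *
          Q (Pi.single i 1) (Pi.single j 1) l :=
  stmt_15_general k P Q hPsymm hQsymm hPtr hQtr hP0 hQ0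
end

section
/- Let P, Q : ℝ² × ℝ² → ℝ² be bilinear maps that are symmetric, tracefree (P(e₁,e₁) + P(e₂,e₂) = 0 and likewise for Q) and both nonzero, and assume: |P(e₁,e₁)|² = |P(e₁,e₂)|², |Q(e₁,e₁)|² = |Q(e₁,e₂)|², ⟨P(e₁,e₁), P(e₁,e₂)⟩ = 0, ⟨Q(e₁,e₁), Q(e₁,e₂)⟩ = 0, and the ordered pairs (P(e₁,e₁), P(e₁,e₂)) and (Q(e₁,e₁), Q(e₁,e₂)) determine opposite orientations of ℝ², i.e. det(P(e₁,e₁), P(e₁,e₂)) · det(Q(e₁,e₁), Q(e₁,e₂)) < 0. Then for every S ∈ SO(2) and T ∈ O(2) with ⟨P_{S,T}, Q⟩ > 0 one has det T = −1, i.e. T ∈ O(2) ∖ SO(2). -/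
private lemma aux_pos_left (a0 a1 b0 b1 z : ℝ) (h : (a0 * b1 - a1 * b0) * z < 0) :
    0 < a0 ^ 2 + a1 ^ 2 := by
  by_contra hcon
  push_neg at hcon
  have hsum : a0 ^ 2 + a1 ^ 2 = 0 := le_antisymm hcon (by positivity)
  obtain ⟨h1, h2⟩ := (add_eq_zero_iff_of_nonneg (by positivity) (by positivity)).mp hsum
  rw [pow_eq_zero_iff (by norm_num : (2:ℕ) ≠ 0)] at h1 h2
  rw [h1, h2] at h
  nlinarith [h]

private lemma aux_pos_right (c0 c1 d0 d1 z : ℝ) (h : z * (c0 * d1 - c1 * d0) < 0) :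
    0 < c0 ^ 2 + c1 ^ 2 := by
  by_contra hcon
  push_neg at hcon
  have hsum : c0 ^ 2 + c1 ^ 2 = 0 := le_antisymm hcon (by positivity)
  obtain ⟨h1, h2⟩ := (add_eq_zero_iff_of_nonneg (by positivity) (by positivity)).mp hsum
  rw [pow_eq_zero_iff (by norm_num : (2:ℕ) ≠ 0)] at h1 h2
  rw [h1, h2] at h
  nlinarith [h]

private lemma aux_rot (p q r s : ℝ) (h1 : p * p + q * q = 1) (h2 : r * r + s * s = 1)
    (hdet : p * s - q * r = 1) : s = p ∧ r = -q := by
  have key : (s - p) ^ 2 + (r + q) ^ 2 = 0 := by linear_combination h1 + h2 - 2 * hdet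
  have e1 : (s - p) ^ 2 ≤ 0 := by nlinarith [sq_nonneg (r + q)]
  have e2 : (r + q) ^ 2 ≤ 0 := by nlinarith [sq_nonneg (s - p)]
  have f1 : s - p = 0 :=
    pow_eq_zero_iff (by norm_num : (2:ℕ) ≠ 0) |>.mp (le_antisymm e1 (sq_nonneg _))
  have f2 : r + q = 0 :=
    pow_eq_zero_iff (by norm_num : (2:ℕ) ≠ 0) |>.mp (le_antisymm e2 (sq_nonneg _))
  exact ⟨by linarith, by linarith⟩

private lemma aux_struct (a0 a1 b0 b1 c0 c1 d0 d1 : ℝ)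
    (hPnorm : a0 ^ 2 + a1 ^ 2 = b0 ^ 2 + b1 ^ 2)
    (hQnorm : c0 ^ 2 + c1 ^ 2 = d0 ^ 2 + d1 ^ 2)
    (hPorth : a0 * b0 + a1 * b1 = 0)
    (hQorth : c0 * d0 + c1 * d1 = 0)
    (hopp : (a0 * b1 - a1 * b0) * (c0 * d1 - c1 * d0) < 0)
    (hA : 0 < a0 ^ 2 + a1 ^ 2) (hC : 0 < c0 ^ 2 + c1 ^ 2) :
    ∃ l : ℝ, b0 = -(l * a1) ∧ b1 = l * a0 ∧ d0 = l * c1 ∧ d1 = -(l * c0) ∧ l ^ 2 = 1 := by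
  have hAne : a0 ^ 2 + a1 ^ 2 ≠ 0 := hA.ne'
  have hCne : c0 ^ 2 + c1 ^ 2 ≠ 0 := hC.ne'
  have hAC : 0 < (a0 ^ 2 + a1 ^ 2) * (c0 ^ 2 + c1 ^ 2) := mul_pos hA hC
  have he2 : (a0 * b1 - a1 * b0) ^ 2 = (a0 ^ 2 + a1 ^ 2) ^ 2 := by
    linear_combination (-(a0 ^ 2 + a1 ^ 2)) * hPnorm - (a0 * b0 + a1 * b1) * hPorth
  have hf2 : (c0 * d1 - c1 * d0) ^ 2 = (c0 ^ 2 + c1 ^ 2) ^ 2 := by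
    linear_combination (-(c0 ^ 2 + c1 ^ 2)) * hQnorm - (c0 * d0 + c1 * d1) * hQorth
  have hef : (a0 * b1 - a1 * b0) * (c0 * d1 - c1 * d0)
      = -((a0 ^ 2 + a1 ^ 2) * (c0 ^ 2 + c1 ^ 2)) := by
    have h0 : ((a0 * b1 - a1 * b0) * (c0 * d1 - c1 * d0) - (a0 ^ 2 + a1 ^ 2) * (c0 ^ 2 + c1 ^ 2))
        * ((a0 * b1 - a1 * b0) * (c0 * d1 - c1 * d0) + (a0 ^ 2 + a1 ^ 2) * (c0 ^ 2 + c1 ^ 2))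
        = 0 := by
      linear_combination (c0 * d1 - c1 * d0) ^ 2 * he2 + (a0 ^ 2 + a1 ^ 2) ^ 2 * hf2
    rcases mul_eq_zero.mp h0 with h | h
    · exfalso; nlinarith [hopp, hAC]
    · linarith
  refine ⟨(a0 * b1 - a1 * b0) / (a0 ^ 2 + a1 ^ 2), ?_, ?_, ?_, ?_, ?_⟩
  · rw [div_mul_eq_mul_div, eq_comm, neg_div', div_eq_iff hAne]
    linear_combination (-a0) * hPorth
  · rw [div_mul_eq_mul_div, eq_comm, div_eq_iff hAne]
    linear_combination (-a1) * hPorth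
  · have hd0C : d0 * (c0 ^ 2 + c1 ^ 2) = -((c0 * d1 - c1 * d0) * c1) := by
      linear_combination c0 * hQorth
    have key : (d0 * (a0 ^ 2 + a1 ^ 2) - (a0 * b1 - a1 * b0) * c1)
        * ((a0 ^ 2 + a1 ^ 2) * (c0 ^ 2 + c1 ^ 2)) = 0 := by
      linear_combination (a0 ^ 2 + a1 ^ 2) ^ 2 * hd0C
        - (a0 * b1 - a1 * b0) * c1 * hef + (c0 * d1 - c1 * d0) * c1 * he2
    rcases mul_eq_zero.mp key with h | h
    · rw [div_mul_eq_mul_div, eq_comm, div_eq_iff hAne]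
      linarith
    · exact absurd h hAC.ne'
  · have hd1C : d1 * (c0 ^ 2 + c1 ^ 2) = (c0 * d1 - c1 * d0) * c0 := by
      linear_combination c1 * hQorth
    have key : (d1 * (a0 ^ 2 + a1 ^ 2) + (a0 * b1 - a1 * b0) * c0)
        * ((a0 ^ 2 + a1 ^ 2) * (c0 ^ 2 + c1 ^ 2)) = 0 := by
      linear_combination (a0 ^ 2 + a1 ^ 2) ^ 2 * hd1C
        + (a0 * b1 - a1 * b0) * c0 * hef - (c0 * d1 - c1 * d0) * c0 * he2
    rcases mul_eq_zero.mp key with h | h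
    · rw [div_mul_eq_mul_div, eq_comm, neg_div', div_eq_iff hAne]
      linarith
    · exact absurd h hAC.ne'
  · rw [div_pow, he2, div_self (pow_ne_zero _ hA.ne')]

set_option maxHeartbeats 1000000 in
theorem stmt_16
    (P Q : (Fin 2 → ℝ) →ₗ[ℝ] (Fin 2 → ℝ) →ₗ[ℝ] (Fin 2 → ℝ))
    (hPsymm : ∀ ζ η : Fin 2 → ℝ, P ζ η = P η ζ)
    (hQsymm : ∀ ζ η : Fin 2 → ℝ, Q ζ η = Q η ζ)
    (hPtr : P (Pi.single 0 1) (Pi.single 0 1) + P (Pi.single 1 1) (Pi.single 1 1) = 0)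
    (hQtr : Q (Pi.single 0 1) (Pi.single 0 1) + Q (Pi.single 1 1) (Pi.single 1 1) = 0)
    (hP0 : P ≠ 0) (hQ0 : Q ≠ 0)
    (hPnorm : ∑ l : Fin 2, (P (Pi.single 0 1) (Pi.single 0 1)) l ^ 2
      = ∑ l : Fin 2, (P (Pi.single 0 1) (Pi.single 1 1)) l ^ 2)
    (hQnorm : ∑ l : Fin 2, (Q (Pi.single 0 1) (Pi.single 0 1)) l ^ 2
      = ∑ l : Fin 2, (Q (Pi.single 0 1) (Pi.single 1 1)) l ^ 2)
    (hPorth : ∑ l : Fin 2, (P (Pi.single 0 1) (Pi.single 0 1)) l *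
      (P (Pi.single 0 1) (Pi.single 1 1)) l = 0)
    (hQorth : ∑ l : Fin 2, (Q (Pi.single 0 1) (Pi.single 0 1)) l *
      (Q (Pi.single 0 1) (Pi.single 1 1)) l = 0)
    (hopp :
      ((P (Pi.single 0 1) (Pi.single 0 1)) 0 * (P (Pi.single 0 1) (Pi.single 1 1)) 1 -
        (P (Pi.single 0 1) (Pi.single 0 1)) 1 * (P (Pi.single 0 1) (Pi.single 1 1)) 0) *
      ((Q (Pi.single 0 1) (Pi.single 0 1)) 0 * (Q (Pi.single 0 1) (Pi.single 1 1)) 1 -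
        (Q (Pi.single 0 1) (Pi.single 0 1)) 1 * (Q (Pi.single 0 1) (Pi.single 1 1)) 0) < 0) :
    ∀ S T : Matrix (Fin 2) (Fin 2) ℝ,
      S ∈ Matrix.orthogonalGroup (Fin 2) ℝ → S.det = 1 →
      T ∈ Matrix.orthogonalGroup (Fin 2) ℝ →
      0 < (∑ i : Fin 2, ∑ j : Fin 2, ∑ l : Fin 2,
        T.mulVec (P (S⁻¹.mulVec (Pi.single i 1)) (S⁻¹.mulVec (Pi.single j 1))) l *
          Q (Pi.single i 1) (Pi.single j 1) l) →
      T.det = -1 := by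
  intro S T hS hdS hT hpos
  rw [Matrix.mem_orthogonalGroup_iff] at hS hT
  replace hS : S * S.transpose = 1 := by simpa using hS
  replace hT : T * T.transpose = 1 := by simpa using hT
  have hdT : T.det = 1 ∨ T.det = -1 := by
    have h := congrArg Matrix.det hT
    rw [Matrix.det_mul, Matrix.det_transpose] at h
    simp only [Matrix.det_one] at h
    exact mul_self_eq_one_iff.mp h
  rcases hdT with hdT | hdT
  swap
  · exact hdT
  exfalso
  -- basic bilinear expansion for P and Q
  have hP10 : P (Pi.single 1 1) (Pi.single 0 1) = P (Pi.single 0 1) (Pi.single 1 1) :=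
    hPsymm _ _
  have hQ10 : Q (Pi.single 1 1) (Pi.single 0 1) = Q (Pi.single 0 1) (Pi.single 1 1) :=
    hQsymm _ _
  have hP11 : P (Pi.single 1 1) (Pi.single 1 1) = -(P (Pi.single 0 1) (Pi.single 0 1)) :=
    eq_neg_of_add_eq_zero_right hPtr
  have hQ11 : Q (Pi.single 1 1) (Pi.single 1 1) = -(Q (Pi.single 0 1) (Pi.single 0 1)) :=
    eq_neg_of_add_eq_zero_right hQtr
  have hPvw : ∀ (v w : Fin 2 → ℝ) (k : Fin 2), P v w k
      = (v 0 * w 0 - v 1 * w 1) * P (Pi.single 0 1) (Pi.single 0 1) k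
        + (v 0 * w 1 + v 1 * w 0) * P (Pi.single 0 1) (Pi.single 1 1) k := by
    intro v w k
    have hv : v = v 0 • (Pi.single 0 1 : Fin 2 → ℝ) + v 1 • (Pi.single 1 1 : Fin 2 → ℝ) := by
      funext i; fin_cases i <;> simp
    have hw : w = w 0 • (Pi.single 0 1 : Fin 2 → ℝ) + w 1 • (Pi.single 1 1 : Fin 2 → ℝ) := by
      funext i; fin_cases i <;> simp
    conv_lhs => rw [hv, hw]
    simp only [map_add, map_smul, LinearMap.add_apply, LinearMap.smul_apply,
      Pi.add_apply, Pi.smul_apply, smul_eq_mul, hP10, hP11, Pi.neg_apply]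
    ring
  have hSinv : S⁻¹ = S.transpose := Matrix.inv_eq_right_inv hS
  have hrowS : ∀ (i k : Fin 2), S⁻¹.mulVec (Pi.single i 1) k = S i k := by
    intro i k
    rw [hSinv]
    simp [Matrix.mulVec_single]
  have hTmul : ∀ (u : Fin 2 → ℝ) (l : Fin 2),
      T.mulVec u l = T l 0 * u 0 + T l 1 * u 1 := by
    intro u l
    simp [Matrix.mulVec, dotProduct, Fin.sum_univ_two]
  have hPS : ∀ (i j k : Fin 2),
      P (S⁻¹.mulVec (Pi.single i 1)) (S⁻¹.mulVec (Pi.single j 1)) k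
        = (S i 0 * S j 0 - S i 1 * S j 1) * P (Pi.single 0 1) (Pi.single 0 1) k
          + (S i 0 * S j 1 + S i 1 * S j 0) * P (Pi.single 0 1) (Pi.single 1 1) k := by
    intro i j k
    rw [hPvw, hrowS, hrowS, hrowS, hrowS]
  -- scalar versions of hypotheses
  simp only [Fin.sum_univ_two] at hPnorm hQnorm hPorth hQorth
  have hA := aux_pos_left _ _ _ _ _ hopp
  have hC := aux_pos_right _ _ _ _ _ hopp
  -- rotation structure of S and T
  have hS' := Matrix.ext_iff.mpr hS
  have hT' := Matrix.ext_iff.mpr hT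
  have hS00 := hS' 0 0
  have hS11 := hS' 1 1
  have hT00 := hT' 0 0
  have hT11 := hT' 1 1
  simp only [Matrix.mul_apply, Matrix.transpose_apply, Fin.sum_univ_two,
    Matrix.one_apply] at hS00 hS11 hT00 hT11
  norm_num at hS00 hS11 hT00 hT11
  rw [Matrix.det_fin_two] at hdS hdT
  obtain ⟨hs11, hs10⟩ := aux_rot (S 0 0) (S 0 1) (S 1 0) (S 1 1) hS00 hS11 (by linarith)
  obtain ⟨ht11, ht10⟩ := aux_rot (T 0 0) (T 0 1) (T 1 0) (T 1 1) hT00 hT11 (by linarith)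
  -- orientation structure
  obtain ⟨l, hb0, hb1, hd0, hd1, hl2⟩ :=
    aux_struct _ _ _ _ _ _ _ _ hPnorm hQnorm hPorth hQorth hopp hA hC
  -- expand the positivity hypothesis
  simp only [Fin.sum_univ_two, hTmul, hPS, hQ10, hQ11, Pi.neg_apply] at hpos
  rw [hs11, hs10, ht11, ht10, hb0, hb1, hd0, hd1] at hpos
  have hfact : (l - 1) * (l + 1) = 0 := by linear_combination hl2
  rcases mul_eq_zero.mp hfact with h | h
  · have hl1 : l = 1 := by linarith
    rw [hl1] at hpos
    ring_nf at hpos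
    linarith
  · have hl1 : l = -1 := by linarith
    rw [hl1] at hpos
    ring_nf at hpos
    linarith
end
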